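/- arXiv:2412.16993 — 8 statements merged into one kernel-verified Lean document; each statement's English description precedes it below -/
import Mathlib

section
/- Let w ∈ ℂ satisfy w^d = −1. Then the identity s^d + (w^{−1}·t)^d + t^d = s^d holds in the polynomial ring ℂ[s,t]; consequently the tangent line to the Fermat curve F_d at the inflection point (0 : 1 : w), namely the line {(s : w^{−1}t : t)} = V(y − w^{−1}z), meets F_d only at the point (0 : 1 : w), and the restriction of F to this line is s^d, so the intersection multiplicity of the tangent with F_d at the inflection point equals d (all inflection points of F_d are maximal). -/
open MvPolynomial

/-- Let `d ≥ 3` and `w^d = -1`.  Then `s^d + (w⁻¹ t)^d + t^d = s^d` in `ℂ[s,t]`, so the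
restriction of `F = x^d + y^d + z^d` to the tangent line `V(y - w⁻¹ z)` at the inflection
point `(0 : 1 : w)` is `s^d`; consequently the tangent meets the Fermat curve `F_d` only at
`(0 : 1 : w)` (a point `(s : w⁻¹ t : t)` of the line on `F_d` must have `s = 0`, `t ≠ 0`),
and the intersection multiplicity of the tangent with `F_d` at the inflection point is `d`. -/
theorem fermat_inflection_maximal (d : ℕ) (hd : 3 ≤ d) (w : ℂ) (hw : w ^ d = -1) :
    ((X 0 : MvPolynomial (Fin 2) ℂ) ^ d + (C w⁻¹ * X 1) ^ d + (X 1) ^ d = (X 0) ^ d) ∧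
    (∀ s t : ℂ, ¬(s = 0 ∧ t = 0) →
      s ^ d + (w⁻¹ * t) ^ d + t ^ d = 0 → s = 0 ∧ t ≠ 0) := by
  have hwinv : (w⁻¹) ^ d = -1 := by
    rw [inv_pow, hw]
    norm_num
  constructor
  · rw [mul_pow, ← C_pow, hwinv]
    rw [map_neg, map_one, neg_one_mul]
    ring
  · intro s t hst heq
    rw [mul_pow, hwinv] at heq
    have hs : s = 0 := by
      have : s ^ d = 0 := by linear_combination heq
      exact pow_eq_zero_iff (by omega) |>.mp this
    refine ⟨hs, fun ht => hst ⟨hs, ht⟩⟩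
end

section
/- The set of points of ℙ²(ℂ) lying both on the Fermat curve F_d and on the line arrangement B : (x^d − y^d)(y^d − z^d)(z^d − x^d) = 0 has exactly 3d² elements (the sextactic points of F_d). -/
open scoped LinearAlgebra.Projectivization

namespace FermatSext

open Projectivization Polynomial

def Q (d : ℕ) (v : Fin 3 → ℂ) : Prop :=
  v 0 ^ d + v 1 ^ d + v 2 ^ d = 0 ∧
  (v 0 ^ d - v 1 ^ d) * (v 1 ^ d - v 2 ^ d) * (v 2 ^ d - v 0 ^ d) = 0

lemma Q_smul {d : ℕ} {c : ℂ} (hc : c ≠ 0) (v : Fin 3 → ℂ) :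
    Q d (c • v) ↔ Q d v := by
  have hcd : c ^ d ≠ 0 := pow_ne_zero _ hc
  have h : ∀ j, (c • v) j ^ d = c ^ d * v j ^ d := by
    intro j; simp [mul_pow]
  unfold Q
  rw [h 0, h 1, h 2]
  rw [show c ^ d * v 0 ^ d + c ^ d * v 1 ^ d + c ^ d * v 2 ^ d
      = c ^ d * (v 0 ^ d + v 1 ^ d + v 2 ^ d) by ring,
    show (c ^ d * v 0 ^ d - c ^ d * v 1 ^ d) * (c ^ d * v 1 ^ d - c ^ d * v 2 ^ d) *
        (c ^ d * v 2 ^ d - c ^ d * v 0 ^ d)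
      = c ^ d * c ^ d * c ^ d *
        ((v 0 ^ d - v 1 ^ d) * (v 1 ^ d - v 2 ^ d) * (v 2 ^ d - v 0 ^ d)) by ring]
  simp [mul_eq_zero, hcd]

lemma Q_rep {d : ℕ} (v : Fin 3 → ℂ) (hv : v ≠ 0) :
    Q d (Projectivization.mk ℂ v hv).rep ↔ Q d v := by
  obtain ⟨u, hu⟩ := Projectivization.exists_smul_eq_mk_rep ℂ v hv
  rw [← hu, Units.smul_def, Q_smul u.ne_zero]

lemma ncard_pow_eq {d : ℕ} (hd : d ≠ 0) {c : ℂ} (hc : c ≠ 0) :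
    {x : ℂ | x ^ d = c}.ncard = d := by
  have hζ : IsPrimitiveRoot (Complex.exp (2 * Real.pi * Complex.I / d)) d :=
    Complex.isPrimitiveRoot_exp d hd
  have hset : {x : ℂ | x ^ d = c} = ↑((nthRoots d c).toFinset) := by
    ext x; simp [Polynomial.mem_nthRoots (Nat.pos_of_ne_zero hd)]
  rw [hset, Set.ncard_coe_finset, Multiset.toFinset_card_of_nodup (hζ.nthRoots_nodup hc),
    hζ.card_nthRoots, if_pos (IsAlgClosed.exists_pow_nat_eq c (Nat.pos_of_ne_zero hd))]

lemma ncard_prod {α β : Type*} (s : Set α) (t : Set β) :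
    (s ×ˢ t).ncard = s.ncard * t.ncard := by
  rw [← Nat.card_coe_set_eq, ← Nat.card_coe_set_eq, ← Nat.card_coe_set_eq,
    ← Nat.card_prod]
  exact Nat.card_congr (Equiv.Set.prod s t)

def vtx (i : Fin 3) (a b : ℂ) : Fin 3 → ℂ := ![![a, 1, b], ![1, b, a], ![b, a, 1]] i

lemma vtx_ne (i : Fin 3) (a b : ℂ) : vtx i a b ≠ 0 := by
  fin_cases i <;>
  · intro h
    have h0 := congrFun h 0
    have h1 := congrFun h 1
    have h2 := congrFun h 2
    simp [vtx] at h0 h1 h2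

noncomputable def f (p : Fin 3 × ℂ × ℂ) : ℙ ℂ (Fin 3 → ℂ) :=
  Projectivization.mk ℂ (vtx p.1 p.2.1 p.2.2) (vtx_ne _ _ _)

def T (d : ℕ) : Set (Fin 3 × ℂ × ℂ) := {p | p.2.1 ^ d = 1 ∧ p.2.2 ^ d = -2}

lemma injOn (d : ℕ) : Set.InjOn f (T d) := by
  rintro ⟨i, a, b⟩ ⟨ha, hb⟩ ⟨j, a', b'⟩ ⟨ha', hb'⟩ hfe
  obtain ⟨u, hu⟩ := (Projectivization.mk_eq_mk_iff ℂ _ _ (vtx_ne i a b) (vtx_ne j a' b')).1 hfe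
  have h0 := congrFun hu 0
  have h1 := congrFun hu 1
  have h2 := congrFun hu 2
  fin_cases i <;> fin_cases j <;>
    simp only [vtx, Units.smul_def, Pi.smul_apply, smul_eq_mul, Fin.zero_eta, Fin.mk_one,
      Fin.reduceFinMk, Matrix.cons_val_zero, Matrix.cons_val_one, Matrix.head_cons,
      Matrix.cons_val_two, Matrix.tail_cons, mul_one] at h0 h1 h2
  · -- 0 0
    rw [h1, one_mul] at h0 h2
    exact Prod.ext rfl (Prod.ext h0.symm h2.symm)
  · -- 0 1
    rw [← h0] at ha
    have e : ((u : ℂ) * b') ^ d = 1 := by rw [h1, one_pow]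
    rw [mul_pow, ha, hb', one_mul] at e
    norm_num at e
  · -- 0 2
    rw [← h2] at hb
    have e : ((u : ℂ) * a') ^ d = 1 := by rw [h1, one_pow]
    rw [mul_pow, hb, ha', mul_one] at e
    norm_num at e
  · -- 1 0
    rw [← h1] at hb
    have e : ((u : ℂ) * a') ^ d = 1 := by rw [h0, one_pow]
    rw [mul_pow, hb, ha', mul_one] at e
    norm_num at e
  · -- 1 1
    rw [h0, one_mul] at h1 h2
    exact Prod.ext rfl (Prod.ext h2.symm h1.symm)
  · -- 1 2
    rw [← h2] at ha
    have e : ((u : ℂ) * b') ^ d = 1 := by rw [h0, one_pow]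
    rw [mul_pow, ha, hb', one_mul] at e
    norm_num at e
  · -- 2 0
    rw [← h1] at ha
    have e : ((u : ℂ) * b') ^ d = 1 := by rw [h2, one_pow]
    rw [mul_pow, ha, hb', one_mul] at e
    norm_num at e
  · -- 2 1
    rw [← h0] at hb
    have e : ((u : ℂ) * a') ^ d = 1 := by rw [h2, one_pow]
    rw [mul_pow, hb, ha', mul_one] at e
    norm_num at e
  · -- 2 2
    rw [h2, one_mul] at h0 h1
    exact Prod.ext rfl (Prod.ext h1.symm h0.symm)

lemma image_eq (d : ℕ) (hd : d ≠ 0) :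
    {P : ℙ ℂ (Fin 3 → ℂ) | Q d P.rep} = f '' T d := by
  ext P
  constructor
  · intro hP
    obtain ⟨hsum, hprod⟩ := hP
    have hv : P.rep ≠ 0 := P.rep_nonzero
    rcases mul_eq_zero.1 hprod with h | h
    · rcases mul_eq_zero.1 h with h | h
      · -- P.rep 0 ^ d = P.rep 1 ^ d
        have h01 : P.rep 0 ^ d = P.rep 1 ^ d := sub_eq_zero.1 h
        have hv1 : P.rep 1 ≠ 0 := by
          intro h1
          have h1' : P.rep 1 ^ d = 0 := by rw [h1]; exact zero_pow hd
          have h0 : P.rep 0 = 0 :=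
            pow_eq_zero_iff hd |>.1 (h01.trans h1')
          have h2 : P.rep 2 = 0 := by
            have : P.rep 2 ^ d = 0 := by
              have := hsum
              rw [h1', pow_eq_zero_iff hd |>.2 h0] at this
              linear_combination this
            exact pow_eq_zero_iff hd |>.1 this
          exact hv (funext fun j => by fin_cases j <;> assumption)
        refine ⟨⟨0, P.rep 0 / P.rep 1, P.rep 2 / P.rep 1⟩, ⟨?_, ?_⟩, ?_⟩
        · rw [div_pow, h01, div_self (pow_ne_zero _ hv1)]
        · rw [div_pow, div_eq_iff (pow_ne_zero _ hv1)]
          linear_combination hsum - h01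
        · show Projectivization.mk ℂ _ _ = P
          conv_rhs => rw [← P.mk_rep]
          rw [Projectivization.mk_eq_mk_iff]
          refine ⟨Units.mk0 (P.rep 1)⁻¹ (inv_ne_zero hv1), funext fun j => ?_⟩
          fin_cases j <;>
            simp [vtx, Units.smul_def, div_eq_inv_mul, inv_mul_cancel₀ hv1]
      · -- P.rep 1 ^ d = P.rep 2 ^ d
        have h12 : P.rep 1 ^ d = P.rep 2 ^ d := sub_eq_zero.1 h
        have hv2 : P.rep 2 ≠ 0 := by
          intro h2
          have h2' : P.rep 2 ^ d = 0 := by rw [h2]; exact zero_pow hd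
          have h1 : P.rep 1 = 0 :=
            pow_eq_zero_iff hd |>.1 (h12.trans h2')
          have h0 : P.rep 0 = 0 := by
            have : P.rep 0 ^ d = 0 := by
              have := hsum
              rw [h2', pow_eq_zero_iff hd |>.2 h1] at this
              linear_combination this
            exact pow_eq_zero_iff hd |>.1 this
          exact hv (funext fun j => by fin_cases j <;> assumption)
        refine ⟨⟨2, P.rep 1 / P.rep 2, P.rep 0 / P.rep 2⟩, ⟨?_, ?_⟩, ?_⟩
        · rw [div_pow, h12, div_self (pow_ne_zero _ hv2)]
        · rw [div_pow, div_eq_iff (pow_ne_zero _ hv2)]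
          linear_combination hsum - h12
        · show Projectivization.mk ℂ _ _ = P
          conv_rhs => rw [← P.mk_rep]
          rw [Projectivization.mk_eq_mk_iff]
          refine ⟨Units.mk0 (P.rep 2)⁻¹ (inv_ne_zero hv2), funext fun j => ?_⟩
          fin_cases j <;>
            simp [vtx, Units.smul_def, div_eq_inv_mul, inv_mul_cancel₀ hv2]
    · -- P.rep 2 ^ d = P.rep 0 ^ d
      have h20 : P.rep 2 ^ d = P.rep 0 ^ d := sub_eq_zero.1 h
      have hv0 : P.rep 0 ≠ 0 := by
        intro h0
        have h0' : P.rep 0 ^ d = 0 := by rw [h0]; exact zero_pow hd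
        have h2 : P.rep 2 = 0 :=
          pow_eq_zero_iff hd |>.1 (h20.trans h0')
        have h1 : P.rep 1 = 0 := by
          have : P.rep 1 ^ d = 0 := by
            have := hsum
            rw [h0', pow_eq_zero_iff hd |>.2 h2] at this
            linear_combination this
          exact pow_eq_zero_iff hd |>.1 this
        exact hv (funext fun j => by fin_cases j <;> assumption)
      refine ⟨⟨1, P.rep 2 / P.rep 0, P.rep 1 / P.rep 0⟩, ⟨?_, ?_⟩, ?_⟩
      · rw [div_pow, h20, div_self (pow_ne_zero _ hv0)]
      · rw [div_pow, div_eq_iff (pow_ne_zero _ hv0)]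
        linear_combination hsum - h20
      · show Projectivization.mk ℂ _ _ = P
        conv_rhs => rw [← P.mk_rep]
        rw [Projectivization.mk_eq_mk_iff]
        refine ⟨Units.mk0 (P.rep 0)⁻¹ (inv_ne_zero hv0), funext fun j => ?_⟩
        fin_cases j <;>
          simp [vtx, Units.smul_def, div_eq_inv_mul, inv_mul_cancel₀ hv0]
  · rintro ⟨⟨i, a, b⟩, ⟨ha, hb⟩, rfl⟩
    show Q d (f (i, a, b)).rep
    rw [show f (i, a, b) = Projectivization.mk ℂ (vtx i a b) (vtx_ne i a b) from rfl,
      Q_rep]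
    fin_cases i <;>
      simp only [vtx, Q, Fin.zero_eta, Fin.mk_one, Fin.reduceFinMk, Matrix.cons_val_zero,
        Matrix.cons_val_one, Matrix.head_cons, Matrix.cons_val_two, Matrix.tail_cons] <;>
      rw [ha, hb, one_pow] <;> constructor <;> ring

lemma ncard_T (d : ℕ) (hd : d ≠ 0) : (T d).ncard = 3 * d ^ 2 := by
  have hT : T d = (Set.univ : Set (Fin 3)) ×ˢ ({a : ℂ | a ^ d = 1} ×ˢ {b : ℂ | b ^ d = -2}) := by
    ext ⟨i, a, b⟩
    simp [T, Set.mem_prod]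
  rw [hT, ncard_prod, ncard_prod, ncard_pow_eq hd one_ne_zero,
    ncard_pow_eq hd (by norm_num : (-2 : ℂ) ≠ 0)]
  have : (Set.univ : Set (Fin 3)).ncard = 3 := by
    rw [Set.ncard_univ, Nat.card_eq_fintype_card, Fintype.card_fin]
  rw [this]
  ring

end FermatSext

/-- For `d ≥ 3`, the set of points of `ℙ²(ℂ)` lying both on the Fermat curve
`F_d : x^d + y^d + z^d = 0` and on the line arrangement
`B : (x^d - y^d)(y^d - z^d)(z^d - x^d) = 0` has exactly `3d²` elements
(the sextactic points of `F_d`). -/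
theorem fermat_sextactic_count (d : ℕ) (hd : 3 ≤ d) :
    Set.ncard {P : ℙ ℂ (Fin 3 → ℂ) |
        P.rep 0 ^ d + P.rep 1 ^ d + P.rep 2 ^ d = 0 ∧
        (P.rep 0 ^ d - P.rep 1 ^ d) * (P.rep 1 ^ d - P.rep 2 ^ d) *
          (P.rep 2 ^ d - P.rep 0 ^ d) = 0} = 3 * d ^ 2 := by
  have hd0 : d ≠ 0 := by omega
  have hset : {P : ℙ ℂ (Fin 3 → ℂ) |
        P.rep 0 ^ d + P.rep 1 ^ d + P.rep 2 ^ d = 0 ∧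
        (P.rep 0 ^ d - P.rep 1 ^ d) * (P.rep 1 ^ d - P.rep 2 ^ d) *
          (P.rep 2 ^ d - P.rep 0 ^ d) = 0}
      = {P : ℙ ℂ (Fin 3 → ℂ) | FermatSext.Q d P.rep} := rfl
  rw [hset, FermatSext.image_eq d hd0, Set.ncard_image_of_injOn (FermatSext.injOn d),
    FermatSext.ncard_T d hd0]
end

section
/- Let u ∈ ℂ be a primitive 2d-th root of unity (so u^d = −1) and let c ∈ ℂ be nonzero. For i = 1,2,3 let jᵢ ∈ {0,…,d−1} and kᵢ odd with 0 < kᵢ < 2d, and suppose the three points Pᵢ = (u^{2jᵢ} : 1 : u^{−kᵢ}c) of ℙ²(ℂ) are pairwise distinct. Then P₁, P₂, P₃ are collinear if and only if j₁ = j₂ = j₃, or k₁ = k₂ = k₃, or k₁ + 2j₁ ≡ k₂ + 2j₂ ≡ k₃ + 2j₃ (mod 2d). (These three alternatives correspond to the three points lying on a common line of B_z, of M_x, and of N_y, respectively.) -/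
lemma line3 {K : Type*} [Field K] {a1 a2 a3 b1 b2 b3 : K} (h12 : a1 ≠ a2)
    (E : b3*(a1-a2) + b1*(a2-a3) + b2*(a3-a1) = 0) :
    ∃ m t, b1 = m*a1+t ∧ b2 = m*a2+t ∧ b3 = m*a3+t := by
  have h : a1 - a2 ≠ 0 := sub_ne_zero.mpr h12
  refine ⟨(b1-b2)/(a1-a2), b1 - (b1-b2)/(a1-a2)*a1, by ring, ?_, ?_⟩
  · field_simp
    ring
  · field_simp
    linear_combination E

lemma key {a1 a2 a3 b1 b2 b3 : ℂ}
    (ha1 : a1 ≠ 0) (ha2 : a2 ≠ 0) (ha3 : a3 ≠ 0)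
    (hb1 : b1 ≠ 0) (hb2 : b2 ≠ 0) (hb3 : b3 ≠ 0)
    (ha12 : a1 ≠ a2) (ha13 : a1 ≠ a3) (ha23 : a2 ≠ a3)
    (hb12 : b1 ≠ b2)
    (E1 : b3*(a1-a2) + b1*(a2-a3) + b2*(a3-a1) = 0)
    (E2 : b3⁻¹*(a1⁻¹-a2⁻¹) + b1⁻¹*(a2⁻¹-a3⁻¹) + b2⁻¹*(a3⁻¹-a1⁻¹) = 0) :
    b1*a2 = b2*a1 ∧ b2*a3 = b3*a2 := by
  obtain ⟨m, t, e1, e2, e3⟩ := line3 ha12 E1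
  have ha12' : a1⁻¹ ≠ a2⁻¹ := fun h => ha12 (inv_injective h)
  obtain ⟨m', t', f1, f2, f3⟩ := line3 ha12' E2
  have hb12' : b1⁻¹ ≠ b2⁻¹ := fun h => hb12 (inv_injective h)
  have hm : m ≠ 0 := by
    intro h; apply hb12; rw [e1, e2, h]; ring
  have hm' : m' ≠ 0 := by
    intro h; apply hb12'; rw [f1, f2, h]; ring
  have q : ∀ (x y : ℂ), x ≠ 0 → y ≠ 0 → y = m*x+t → y⁻¹ = m'*x⁻¹+t' →
      m*t'*x^2 + (m*m'+t*t'-1)*x + m'*t = 0 := by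
    intro x y hx hyne hy hy'
    have h : (m*x+t)*(m'*x⁻¹+t') = 1 := by rw [← hy, ← hy']; exact mul_inv_cancel₀ hyne
    field_simp at h
    linear_combination h
  have q1 := q a1 b1 ha1 hb1 e1 f1
  have q2 := q a2 b2 ha2 hb2 e2 f2
  have q3 := q a3 b3 ha3 hb3 e3 f3
  have e12 : m*t'*(a1+a2) + (m*m'+t*t'-1) = 0 := by
    rcases mul_eq_zero.mp (show (a1-a2)*(m*t'*(a1+a2)+(m*m'+t*t'-1)) = 0 from by
      linear_combination q1 - q2) with h|h
    · exact absurd (sub_eq_zero.mp h) ha12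
    · exact h
  have e13 : m*t'*(a1+a3) + (m*m'+t*t'-1) = 0 := by
    rcases mul_eq_zero.mp (show (a1-a3)*(m*t'*(a1+a3)+(m*m'+t*t'-1)) = 0 from by
      linear_combination q1 - q3) with h|h
    · exact absurd (sub_eq_zero.mp h) ha13
    · exact h
  have hmt' : m*t' = 0 := by
    rcases mul_eq_zero.mp (show (a2-a3)*(m*t') = 0 from by
      linear_combination e12 - e13) with h|h
    · exact absurd (sub_eq_zero.mp h) ha23
    · exact h
  have ht' : t' = 0 := by
    rcases mul_eq_zero.mp hmt' with h|h
    · exact absurd h hm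
    · exact h
  have hm't : m'*t = 0 := by linear_combination q1 - a1*e12 + a1*a2*hmt'
  have ht : t = 0 := by
    rcases mul_eq_zero.mp hm't with h|h
    · exact absurd h hm'
    · exact h
  constructor
  · rw [e1, e2, ht]; ring
  · rw [e2, e3, ht]; ring

/-- Let `u` be a primitive `2d`-th root of unity and `c ≠ 0`.  Given pairwise distinct
points `Pᵢ = (u^{2jᵢ} : 1 : u^{-kᵢ}c)` of `ℙ²(ℂ)` with `jᵢ < d` and `kᵢ` odd, `0 < kᵢ < 2d`,
the three points are collinear (i.e. the determinant of the matrix of their homogeneous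
coordinates vanishes) if and only if `j₁ = j₂ = j₃`, or `k₁ = k₂ = k₃`, or
`k₁ + 2j₁ ≡ k₂ + 2j₂ ≡ k₃ + 2j₃ (mod 2d)`. -/
theorem fermat_collinear_sextactic (d : ℕ) (hd : 3 ≤ d) (u c : ℂ)
    (hu : IsPrimitiveRoot u (2 * d)) (hc : c ≠ 0)
    (j₁ j₂ j₃ k₁ k₂ k₃ : ℕ)
    (hj₁ : j₁ < d) (hj₂ : j₂ < d) (hj₃ : j₃ < d)
    (hk₁ : Odd k₁) (hk₂ : Odd k₂) (hk₃ : Odd k₃)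
    (hk₁' : 0 < k₁ ∧ k₁ < 2 * d) (hk₂' : 0 < k₂ ∧ k₂ < 2 * d) (hk₃' : 0 < k₃ ∧ k₃ < 2 * d)
    (h12 : (![u ^ (2 * j₁), 1, (u ^ k₁)⁻¹ * c] : Fin 3 → ℂ) ≠ ![u ^ (2 * j₂), 1, (u ^ k₂)⁻¹ * c])
    (h13 : (![u ^ (2 * j₁), 1, (u ^ k₁)⁻¹ * c] : Fin 3 → ℂ) ≠ ![u ^ (2 * j₃), 1, (u ^ k₃)⁻¹ * c])
    (h23 : (![u ^ (2 * j₂), 1, (u ^ k₂)⁻¹ * c] : Fin 3 → ℂ) ≠ ![u ^ (2 * j₃), 1, (u ^ k₃)⁻¹ * c]) :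
    (Matrix.det !![u ^ (2 * j₁), 1, (u ^ k₁)⁻¹ * c;
                   u ^ (2 * j₂), 1, (u ^ k₂)⁻¹ * c;
                   u ^ (2 * j₃), 1, (u ^ k₃)⁻¹ * c] = 0) ↔
      ((j₁ = j₂ ∧ j₂ = j₃) ∨ (k₁ = k₂ ∧ k₂ = k₃) ∨
        (k₁ + 2 * j₁ ≡ k₂ + 2 * j₂ [MOD 2 * d] ∧ k₂ + 2 * j₂ ≡ k₃ + 2 * j₃ [MOD 2 * d])) := by
  have h2d : 2 * d ≠ 0 := by omega
  have hu0 : u ≠ 0 := hu.ne_zero h2d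
  have hnorm : ‖u‖ = 1 := hu.norm'_eq_one h2d
  have hconj : (starRingEnd ℂ) u = u⁻¹ := (Complex.inv_eq_conj hnorm).symm
  have hord : orderOf u = 2 * d := hu.eq_orderOf.symm
  have hred : ∀ m : ℕ, u ^ m = u ^ (m % (2*d)) := by
    intro m
    conv_lhs => rw [← Nat.div_add_mod m (2*d)]
    rw [pow_add, pow_mul, hu.pow_eq_one, one_pow, one_mul]
  have modiff : ∀ m n : ℕ, u ^ m = u ^ n ↔ m ≡ n [MOD 2 * d] := by
    intro m n
    constructor
    · intro h
      have : u ^ (m % (2*d)) = u ^ (n % (2*d)) := by rw [← hred m, ← hred n, h]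
      exact hu.pow_inj (Nat.mod_lt _ (by omega)) (Nat.mod_lt _ (by omega)) this
    · intro h
      rw [hred m, hred n, h]
  have hdetE : Matrix.det !![u ^ (2 * j₁), 1, (u ^ k₁)⁻¹ * c;
                   u ^ (2 * j₂), 1, (u ^ k₂)⁻¹ * c;
                   u ^ (2 * j₃), 1, (u ^ k₃)⁻¹ * c]
      = c * ((u ^ k₃)⁻¹ * (u ^ (2*j₁) - u ^ (2*j₂)) + (u ^ k₁)⁻¹ * (u ^ (2*j₂) - u ^ (2*j₃))
            + (u ^ k₂)⁻¹ * (u ^ (2*j₃) - u ^ (2*j₁))) := by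
    rw [Matrix.det_fin_three]
    simp [Matrix.vecHead, Matrix.vecTail, inv_pow]
    ring
  rw [hdetE, mul_eq_zero, or_iff_right hc]
  have pnz : ∀ m : ℕ, u ^ m ≠ 0 := fun m => pow_ne_zero m hu0
  have bnz : ∀ m : ℕ, (u ^ m)⁻¹ ≠ 0 := fun m => inv_ne_zero (pnz m)
  have ainj : ∀ {j j' : ℕ}, j < d → j' < d → u ^ (2*j) = u ^ (2*j') → j = j' := by
    intro j j' hj hj' h
    have := hu.pow_inj (by omega) (by omega) h
    omega
  have binj : ∀ {k k' : ℕ}, k < 2*d → k' < 2*d → (u ^ k)⁻¹ = (u ^ k')⁻¹ → k = k' := by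
    intro k k' hk hk' h
    exact hu.pow_inj hk hk' (inv_injective h)
  constructor
  · intro hE
    by_cases hj12 : j₁ = j₂
    · subst hj12
      have hk12 : k₁ ≠ k₂ := fun h => h12 (by rw [h])
      have hb12 : (u^k₁)⁻¹ - (u^k₂)⁻¹ ≠ 0 :=
        sub_ne_zero.mpr (fun h => hk12 (binj hk₁'.2 hk₂'.2 h))
      have h0 : ((u^k₁)⁻¹ - (u^k₂)⁻¹) * (u^(2*j₁) - u^(2*j₃)) = 0 := by linear_combination hE
      rcases mul_eq_zero.mp h0 with h|h
      · exact absurd h hb12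
      · exact Or.inl ⟨rfl, ainj hj₁ hj₃ (sub_eq_zero.mp h) ▸ rfl⟩
    · by_cases hj13 : j₁ = j₃
      · subst hj13
        have hk13 : k₁ ≠ k₃ := fun h => h13 (by rw [h])
        have hb13 : (u^k₃)⁻¹ - (u^k₁)⁻¹ ≠ 0 :=
          sub_ne_zero.mpr (fun h => hk13 (binj hk₁'.2 hk₃'.2 h.symm))
        have h0 : ((u^k₃)⁻¹ - (u^k₁)⁻¹) * (u^(2*j₁) - u^(2*j₂)) = 0 := by linear_combination hE
        rcases mul_eq_zero.mp h0 with h|h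
        · exact absurd h hb13
        · exact absurd (ainj hj₁ hj₂ (sub_eq_zero.mp h)) hj12
      · by_cases hj23 : j₂ = j₃
        · subst hj23
          have hk23 : k₂ ≠ k₃ := fun h => h23 (by rw [h])
          have hb23 : (u^k₃)⁻¹ - (u^k₂)⁻¹ ≠ 0 :=
            sub_ne_zero.mpr (fun h => hk23 (binj hk₂'.2 hk₃'.2 h.symm))
          have h0 : ((u^k₃)⁻¹ - (u^k₂)⁻¹) * (u^(2*j₁) - u^(2*j₂)) = 0 := by
            linear_combination hE
          rcases mul_eq_zero.mp h0 with h|h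
          · exact absurd h hb23
          · exact absurd (ainj hj₁ hj₂ (sub_eq_zero.mp h)) hj12
        · -- a's pairwise distinct
          have ha12 : u^(2*j₁) ≠ u^(2*j₂) := fun h => hj12 (ainj hj₁ hj₂ h)
          have ha13 : u^(2*j₁) ≠ u^(2*j₃) := fun h => hj13 (ainj hj₁ hj₃ h)
          have ha23 : u^(2*j₂) ≠ u^(2*j₃) := fun h => hj23 (ainj hj₂ hj₃ h)
          by_cases hk12 : k₁ = k₂
          · subst hk12
            have h0 : ((u^k₃)⁻¹ - (u^k₁)⁻¹) * (u^(2*j₁) - u^(2*j₂)) = 0 := by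
              linear_combination hE
            rcases mul_eq_zero.mp h0 with h|h
            · exact Or.inr (Or.inl ⟨rfl, (binj hk₃'.2 hk₁'.2 (sub_eq_zero.mp h)).symm⟩)
            · exact absurd (sub_eq_zero.mp h) ha12
          · by_cases hk13 : k₁ = k₃
            · subst hk13
              have h0 : ((u^k₁)⁻¹ - (u^k₂)⁻¹) * (u^(2*j₁) - u^(2*j₃)) = 0 := by
                linear_combination hE
              rcases mul_eq_zero.mp h0 with h|h
              · exact absurd (binj hk₁'.2 hk₂'.2 (sub_eq_zero.mp h)) hk12
              · exact absurd (sub_eq_zero.mp h) ha13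
            · by_cases hk23 : k₂ = k₃
              · subst hk23
                have h0 : ((u^k₁)⁻¹ - (u^k₂)⁻¹) * (u^(2*j₂) - u^(2*j₃)) = 0 := by
                  linear_combination hE
                rcases mul_eq_zero.mp h0 with h|h
                · exact absurd (binj hk₁'.2 hk₂'.2 (sub_eq_zero.mp h)) hk12
                · exact absurd (sub_eq_zero.mp h) ha23
              · -- all distinct: conjugate equation and apply `key`
                have hb12 : (u^k₁)⁻¹ ≠ (u^k₂)⁻¹ := fun h => hk12 (binj hk₁'.2 hk₂'.2 h)
                have EC := congrArg (starRingEnd ℂ) hE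
                simp only [map_add, map_sub, map_mul, map_inv₀, map_pow, hconj, map_zero,
                  inv_pow, inv_inv] at EC
                have E2 : (((u^k₃)⁻¹)⁻¹) * ((u^(2*j₁))⁻¹ - (u^(2*j₂))⁻¹)
                    + (((u^k₁)⁻¹)⁻¹) * ((u^(2*j₂))⁻¹ - (u^(2*j₃))⁻¹)
                    + (((u^k₂)⁻¹)⁻¹) * ((u^(2*j₃))⁻¹ - (u^(2*j₁))⁻¹) = 0 := by
                  simp only [inv_inv]
                  linear_combination EC
                obtain ⟨hA, hB⟩ := key (pnz (2*j₁)) (pnz (2*j₂)) (pnz (2*j₃))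
                  (bnz k₁) (bnz k₂) (bnz k₃) ha12 ha13 ha23 hb12 hE E2
                refine Or.inr (Or.inr ⟨(modiff _ _).mp ?_, (modiff _ _).mp ?_⟩)
                · rw [pow_add, pow_add]
                  field_simp at hA
                  linear_combination -hA
                · rw [pow_add, pow_add]
                  field_simp at hB
                  linear_combination -hB
  · rintro (⟨e, f⟩|⟨e, f⟩|⟨e, f⟩)
    · subst e; subst f; ring
    · subst e; subst f; ring
    · have h1 : u^k₁ * u^(2*j₁) = u^k₂ * u^(2*j₂) := by
        rw [← pow_add, ← pow_add]; exact (modiff _ _).mpr e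
      have h2 : u^k₂ * u^(2*j₂) = u^k₃ * u^(2*j₃) := by
        rw [← pow_add, ← pow_add]; exact (modiff _ _).mpr f
      have hne1 := pnz k₁; have hne2 := pnz k₂; have hne3 := pnz k₃
      field_simp
      linear_combination (u^k₂ - u^k₃) * h1 + (u^k₂ - u^k₁) * h2
end

section
/- Let u ∈ ℂ be a primitive 2d-th root of unity (so u^d = −1) and let c be the positive real d-th root of 2. Let j₁, j₂, j_y ∈ {0,…,d−1} and k₁, k₂, k_y odd with 0 < kᵢ < 2d. If the determinant of the 3×3 matrix with rows (u^{2j₁}, 1, u^{−k₁}c), (u^{2j₂}, 1, u^{−k₂}c), (1, u^{−k_y}c, u^{2j_y}) vanishes, then j₁ = j₂ and k₁ = k₂. In other words, no line of ℙ²(ℂ) contains two distinct sextactic points of the z-cluster of the Fermat curve F_d together with a sextactic point of the y-cluster. -/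
/-!
Expanding the determinant along powers of `c` gives `α + β c + γ c² = 0` with `α, β, γ` in the
cyclotomic field `K = ℚ(u)` and `β = u^{-k₂} - u^{-k₁}`. Since `ℚ(u)` is a CM field, every
Galois conjugate of a real element of `K` is real; the only real `d`-th roots of `2` are `±c`,
so `c ∈ K` would force `c² ∈ ℚ`, which is impossible for `d ≥ 3`. Hence `c ∉ K`, and as `K`
contains the `d`-th roots of unity, `c` has a `K`-conjugate `η c` with `η ∈ K`, `η ≠ 1`.
Subtracting the relations for `c` and `η c` forces `β = 0`, i.e. `k₁ = k₂`; the relation then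
factors as `(u^{2j₁} - u^{2j₂}) (u^{2j_y} - c² u^{-k_y-k₁}) = 0`, where the terms of the second
factor have absolute values `1 ≠ c²`.
-/

open IntermediateField NumberField Polynomial ComplexConjugate

namespace Subfield

variable {L : Type*} [Field L] (K : Subfield L)

theorem exists_ne_one_isConjRoot_mul [IsAlgClosed L] [CharZero L] {n : ℕ} [NeZero n] {ζ : L}
    (hζ : IsPrimitiveRoot ζ n) (hζK : ζ ∈ K) {c : L} (hcn : c ^ n ∈ K) (hc : c ∉ K) :
    ∃ η ∈ K, η ≠ 1 ∧ IsConjRoot K c (η * c) := by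
  have hc0 : c ≠ 0 := fun h => hc (h ▸ K.zero_mem)
  have hroot (x : L) : aeval x (X ^ n - C (⟨c ^ n, hcn⟩ : K)) = x ^ n - c ^ n := by
    rw [map_sub, map_pow, aeval_X, aeval_C]; rfl
  have hint : IsIntegral K c :=
    ⟨_, monic_X_pow_sub_C _ (NeZero.ne n), (hroot c).trans (sub_self _)⟩
  obtain ⟨c', hne, hconj⟩ := (notMem_iff_exists_ne_and_isConjRoot
    (PerfectField.separable_of_irreducible (minpoly.irreducible hint)) (IsAlgClosed.splits _)).1
    (by rintro ⟨y, rfl⟩; exact hc y.2)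
  have hc'n : c' ^ n = c ^ n := sub_eq_zero.1 <| (hroot c') ▸
    aeval_eq_zero_of_dvd_aeval_eq_zero (minpoly.dvd K c ((hroot c).trans (sub_self _)))
      hconj.aeval_eq_zero
  obtain ⟨i, -, hi⟩ := hζ.eq_pow_of_pow_eq_one (ξ := c' / c)
    (by rw [div_pow, hc'n, div_self (pow_ne_zero n hc0)])
  refine ⟨ζ ^ i, K.pow_mem hζK i, fun h => hne ?_, ?_⟩
  · rw [h, eq_comm, div_eq_one_iff_eq hc0] at hi
    exact hi.symm
  · rwa [hi, div_mul_cancel₀ c' hc0]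

theorem eq_zero_of_add_mul_add_mul_sq_eq_zero_of_mul {c η α β γ : L} (hc : c ∉ K) (hηK : η ∈ K)
    (hη : η ≠ 1) (hβ : β ∈ K) (hγ : γ ∈ K) (h : α + β * c + γ * c ^ 2 = 0)
    (h' : α + β * (η * c) + γ * (η * c) ^ 2 = 0) : β = 0 := by
  have hc0 : c ≠ 0 := fun h => hc (h ▸ K.zero_mem)
  have hfac : c * (η - 1) * (β + γ * (η + 1) * c) = 0 := by linear_combination h' - h
  have hlin : β + γ * (η + 1) * c = 0 :=
    (mul_eq_zero.1 hfac).resolve_left (mul_ne_zero hc0 (sub_ne_zero.2 hη))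
  by_contra hβ0
  have hγη : γ * (η + 1) ≠ 0 := by
    rintro h0
    rw [h0, zero_mul, add_zero] at hlin
    exact hβ0 hlin
  refine hc ?_
  rw [(eq_div_iff hγη).2 (by linear_combination hlin : c * (γ * (η + 1)) = -β)]
  exact K.div_mem (K.neg_mem hβ) (K.mul_mem hγ (K.add_mem hηK K.one_mem))

theorem eq_zero_of_add_mul_add_mul_sq_eq_zero [IsAlgClosed L] [CharZero L] {n : ℕ} [NeZero n]
    {ζ : L} (hζ : IsPrimitiveRoot ζ n) (hζK : ζ ∈ K) {c : L} (hcn : c ^ n ∈ K) (hc : c ∉ K)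
    {α β γ : L} (hα : α ∈ K) (hβ : β ∈ K) (hγ : γ ∈ K) (h : α + β * c + γ * c ^ 2 = 0) :
    β = 0 := by
  obtain ⟨η, hηK, hη, hconj⟩ := K.exists_ne_one_isConjRoot_mul hζ hζK hcn hc
  let p : K[X] := C ⟨γ, hγ⟩ * X ^ 2 + C ⟨β, hβ⟩ * X + C ⟨α, hα⟩
  have hp (x : L) : aeval x p = α + β * x + γ * x ^ 2 := by
    simp only [p, map_add, map_mul, map_pow, aeval_C, aeval_X]
    change γ * x ^ 2 + β * x + α = _
    ring
  refine K.eq_zero_of_add_mul_add_mul_sq_eq_zero_of_mul hc hηK hη hβ hγ h ?_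
  rw [← hp] at h ⊢
  exact aeval_eq_zero_of_dvd_aeval_eq_zero (minpoly.dvd K c h) hconj.aeval_eq_zero

end Subfield

theorem NumberField.IsCMField.conj_embedding_eq_of_conj_embedding_eq (K : Type*) [Field K]
    [CharZero K] [IsCMField K] [Algebra.IsIntegral ℚ K] {ψ φ : K →+* ℂ} {x : K}
    (hx : conj (ψ x) = ψ x) : conj (φ x) = φ x := by
  have hfix : IsCMField.complexConj K x = x :=
    ψ.injective ((IsCMField.complexEmbedding_complexConj K ψ x).trans hx)
  rw [← IsCMField.complexEmbedding_complexConj, hfix]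

theorem Complex.sq_eq_sq_of_conj_eq_of_pow_eq {z : ℂ} {r : ℝ} {d : ℕ} (hd : d ≠ 0)
    (hz : conj z = z) (hzr : z ^ d = (r : ℂ) ^ d) : z ^ 2 = (r : ℂ) ^ 2 := by
  obtain ⟨a, rfl⟩ := Complex.conj_eq_iff_real.1 hz
  obtain rfl | ⟨rfl, -⟩ := (pow_eq_pow_iff_of_ne_zero hd).1 (by exact_mod_cast hzr : a ^ d = r ^ d)
  · rfl
  · push_cast; ring

theorem irrational_sq_of_pow_eq_two {c : ℝ} {d : ℕ} (hd : 3 ≤ d) (hcd : c ^ d = 2) :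
    Irrational (c ^ 2) := by
  have : Fact (Nat.Prime 2) := ⟨Nat.prime_two⟩
  refine irrational_nrt_of_n_not_dvd_multiplicity d (m := 4) (by norm_num) 2 ?_ ?_
  · rw [← pow_mul, mul_comm, pow_mul, hcd]; norm_num
  · rw [show (4 : ℤ) = (2 : ℕ) ^ 2 by norm_num,
      multiplicity_pow_self_of_prime (Nat.prime_iff_prime_int.1 Nat.prime_two),
      Nat.mod_eq_of_lt (by omega)]
    norm_num

theorem IsPrimitiveRoot.isCyclotomicExtension_adjoin_rat {n : ℕ} [NeZero n] {u : ℂ}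
    (hu : IsPrimitiveRoot u n) : IsCyclotomicExtension {n} ℚ ℚ⟮u⟯ := by
  change IsCyclotomicExtension {n} ℚ ℚ⟮u⟯.toSubalgebra
  rw [adjoin_simple_toSubalgebra_of_isAlgebraic
    ((hu.isIntegral (NeZero.pos n)).tower_top (A := ℚ)).isAlgebraic]
  exact hu.adjoin_isCyclotomicExtension ℚ

theorem Complex.ofReal_notMem_adjoin_of_pow_eq_two {n d : ℕ} (hn : 2 < n) (hd : 3 ≤ d) {u : ℂ}
    (hu : IsPrimitiveRoot u n) {c : ℝ} (hcd : c ^ d = 2) : (c : ℂ) ∉ ℚ⟮u⟯ := by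
  intro hc
  have : NeZero n := ⟨by omega⟩
  have := hu.isCyclotomicExtension_adjoin_rat
  have : IsCMField ℚ⟮u⟯ := IsCyclotomicExtension.Rat.isCMField _ (S := {n}) ⟨n, rfl, hn⟩
  have := IsCyclotomicExtension.isGalois {n} ℚ ℚ⟮u⟯
  have := IsCyclotomicExtension.finiteDimensional {n} ℚ ℚ⟮u⟯
  set x : ℚ⟮u⟯ := ⟨c, hc⟩
  have hxd : x ^ d = 2 := Subtype.ext <| by
    simp only [x, SubmonoidClass.mk_pow, ← Complex.ofReal_pow, hcd, Complex.ofReal_ofNat]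
    rfl
  have hfix (σ : Gal(ℚ⟮u⟯/ℚ)) : σ (x ^ 2) = x ^ 2 := by
    have hreal : conj (σ x : ℂ) = σ x :=
      IsCMField.conj_embedding_eq_of_conj_embedding_eq ℚ⟮u⟯ (ψ := ℚ⟮u⟯.val)
        (φ := (ℚ⟮u⟯.val : ℚ⟮u⟯ →+* ℂ).comp σ) (Complex.conj_ofReal c)
    have hpow : (σ x : ℂ) ^ d = (c : ℂ) ^ d := by
      rw [← IntermediateField.coe_pow, ← map_pow, hxd, map_ofNat, ← Complex.ofReal_pow, hcd,
        Complex.ofReal_ofNat]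
      rfl
    rw [map_pow]
    exact Subtype.ext (by simpa using Complex.sq_eq_sq_of_conj_eq_of_pow_eq (by omega) hreal hpow)
  obtain ⟨q, hq⟩ := (IsGalois.mem_range_algebraMap_iff_fixed (x ^ 2)).2 hfix
  refine irrational_sq_of_pow_eq_two hd hcd ⟨q, ?_⟩
  have : ((q : ℝ) : ℂ) = ((c ^ 2 : ℝ) : ℂ) := by simpa [x] using congrArg Subtype.val hq
  exact_mod_cast this

theorem fermat_no_mixed_collinear_general (d : ℕ) (hd : 3 ≤ d) (u : ℂ)
    (hu : IsPrimitiveRoot u (2 * d)) (c : ℝ) (hcd : c ^ d = 2)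
    (j₁ j₂ jy k₁ k₂ ky : ℕ)
    (hj₁ : j₁ < d) (hj₂ : j₂ < d)
    (hk₁' : 0 < k₁ ∧ k₁ < 2 * d) (hk₂' : 0 < k₂ ∧ k₂ < 2 * d)
    (hdet : Matrix.det !![u ^ (2 * j₁), 1, (u ^ k₁)⁻¹ * (c : ℂ);
                          u ^ (2 * j₂), 1, (u ^ k₂)⁻¹ * (c : ℂ);
                          1, (u ^ ky)⁻¹ * (c : ℂ), u ^ (2 * jy)] = 0) :
    j₁ = j₂ ∧ k₁ = k₂ := by
  have : NeZero d := ⟨by omega⟩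
  set K := ℚ⟮u⟯.toSubfield
  have hpow (m : ℕ) : u ^ m ∈ K := K.pow_mem (mem_adjoin_simple_self ℚ u) m
  have hinv (m : ℕ) : (u ^ m)⁻¹ ∈ K := K.inv_mem (hpow m)
  have hrel : u ^ (2 * jy) * (u ^ (2 * j₁) - u ^ (2 * j₂)) + ((u ^ k₂)⁻¹ - (u ^ k₁)⁻¹) * c
      + (u ^ ky)⁻¹ * (u ^ (2 * j₂) * (u ^ k₁)⁻¹ - u ^ (2 * j₁) * (u ^ k₂)⁻¹) * c ^ 2 = 0 := by
    rw [Matrix.det_fin_three] at hdet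
    simp only [Matrix.of_apply, Matrix.cons_val', Matrix.cons_val_zero, Matrix.cons_val_fin_one,
      Matrix.cons_val_one, Matrix.cons_val, mul_one, one_mul] at hdet
    linear_combination hdet
  have hβ := K.eq_zero_of_add_mul_add_mul_sq_eq_zero (hu.pow (by omega) rfl) (hpow 2)
    (by rw [← Complex.ofReal_pow, hcd]; exact ofNat_mem K 2)
    (Complex.ofReal_notMem_adjoin_of_pow_eq_two (by omega) hd hu hcd)
    (K.mul_mem (hpow _) (K.sub_mem (hpow _) (hpow _))) (K.sub_mem (hinv _) (hinv _))
    (K.mul_mem (hinv _) (K.sub_mem (K.mul_mem (hpow _) (hinv _)) (K.mul_mem (hpow _) (hinv _))))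
    hrel
  obtain rfl : k₁ = k₂ := hu.pow_inj hk₁'.2 hk₂'.2 (inv_injective (sub_eq_zero.1 hβ).symm)
  have hne : u ^ (2 * jy) ≠ (c : ℂ) ^ 2 * ((u ^ ky)⁻¹ * (u ^ k₁)⁻¹) := by
    intro h
    refine (irrational_sq_of_pow_eq_two hd hcd).ne_one ?_
    simpa [hu.norm'_eq_one (by omega)] using (congrArg norm h).symm
  have hfac : (u ^ (2 * j₁) - u ^ (2 * j₂)) *
      (u ^ (2 * jy) - (c : ℂ) ^ 2 * ((u ^ ky)⁻¹ * (u ^ k₁)⁻¹)) = 0 := by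
    linear_combination hrel
  have hj := hu.pow_inj (by omega) (by omega)
    (sub_eq_zero.1 ((mul_eq_zero.1 hfac).resolve_right (sub_ne_zero.2 hne)))
  exact ⟨by omega, rfl⟩

/-- Let `u` be a primitive `2d`-th root of unity and `c` the positive real `d`-th root
of `2`.  If the determinant of the matrix with rows `(u^{2j₁}, 1, u^{-k₁}c)`,
`(u^{2j₂}, 1, u^{-k₂}c)`, `(1, u^{-k_y}c, u^{2j_y})` vanishes, then `j₁ = j₂` and
`k₁ = k₂`: no line of `ℙ²(ℂ)` contains two distinct sextactic points of the `z`-cluster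
of the Fermat curve `F_d` together with a sextactic point of the `y`-cluster. -/
theorem fermat_no_mixed_collinear (d : ℕ) (hd : 3 ≤ d) (u : ℂ)
    (hu : IsPrimitiveRoot u (2 * d)) (c : ℝ) (hc : 0 < c) (hcd : c ^ d = 2)
    (j₁ j₂ jy k₁ k₂ ky : ℕ)
    (hj₁ : j₁ < d) (hj₂ : j₂ < d) (hjy : jy < d)
    (hk₁ : Odd k₁) (hk₂ : Odd k₂) (hky : Odd ky)
    (hk₁' : 0 < k₁ ∧ k₁ < 2 * d) (hk₂' : 0 < k₂ ∧ k₂ < 2 * d) (hky' : 0 < ky ∧ ky < 2 * d)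
    (hdet : Matrix.det !![u ^ (2 * j₁), 1, (u ^ k₁)⁻¹ * (c : ℂ);
                          u ^ (2 * j₂), 1, (u ^ k₂)⁻¹ * (c : ℂ);
                          1, (u ^ ky)⁻¹ * (c : ℂ), u ^ (2 * jy)] = 0) :
    j₁ = j₂ ∧ k₁ = k₂ :=
  fermat_no_mixed_collinear_general d hd u hu c hcd j₁ j₂ jy k₁ k₂ ky hj₁ hj₂ hk₁' hk₂' hdet
end

section
/- Let u ∈ ℂ be a primitive 2d-th root of unity (so u^d = −1) and c ∈ ℂ with c^d = 2, and consider the 3d lines of the arrangement M: z = u^{−k}c·y (family M_x), x = u^{−k}c·z (family M_y), y = u^{−k}c·x (family M_z), for k odd with 0 < k < 2d. Then: (i) any point of ℙ²(ℂ) on two distinct lines of the same family is the corresponding coordinate point ((1:0:0), (0:1:0), (0:0:1) respectively), so the coordinate points are ordinary d-fold points of M; (ii) the lines z − u^{−k₁}c·y = 0 and y − u^{−k₂}c·x = 0 meet exactly at the point (1 : u^{−k₂}c : u^{−(k₁+k₂)}c²), which lies on no line of M_y and does not lie on the Fermat curve F_d; hence all intersection points of lines from different families are ordinary double points of M, and there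 are 3d² of them. -/
/-!
Write the three families uniformly: family `i` consists of the lines `x_{i+2} = a x_{i+1}`
(indices in `Fin 3`; `M_x, M_y, M_z` are `i = 0, 1, 2`), whose slopes `a = u^{-k} c`, `k` odd,
are the `d` distinct `d`-th roots of `-2`. Two lines of family `i` with different slopes meet
only where `x_{i+1} = x_{i+2} = 0`, i.e. at the coordinate point `e_i`. A line of family `i`
and one of family `i + 2` meet in the single point `(1 : b : ab)`, coordinates read from
position `i` on. A point on lines of all three families has `x₀ = xyz · x₀` for slopes
`x, y, z`, forcing `xyz = 1`; but `(xyz)^d = -8`. So no crossing point lies on a third family,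
the `3 d²` crossing points are distinct, and `(1 : b : ab)` is not on `F_d` since
`1 + b^d + (ab)^d = 1 - 2 + 4`.
-/

open scoped LinearAlgebra.Projectivization

/-- The point of `ℙ²(ℂ)` with homogeneous coordinates `v` (junk value if `v = 0`). -/
noncomputable def P2mk (v : Fin 3 → ℂ) : ℙ ℂ (Fin 3 → ℂ) :=
  if hv : v ≠ 0 then Projectivization.mk ℂ v hv
  else Projectivization.mk ℂ ![1, 0, 0] (fun h => by simpa using congrFun h 0)

open Set

namespace FermatArrangement

lemma fin3_eq_or_eq_add_one_or_eq_add_two (i j : Fin 3) : j = i ∨ j = i + 1 ∨ j = i + 2 := by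
  revert i j; decide

lemma fin3_eq_or_eq_add_two_of_ne (i j k : Fin 3) (hij : i ≠ j) :
    k = i ∨ k = i + 2 ∨ k = j ∨ k = j + 2 := by
  revert i j k; decide

lemma _root_.IsPrimitiveRoot.pow_eq_neg_one_of_two_mul {R : Type*} [CommRing R]
    [NoZeroDivisors R] {ζ : R} {n : ℕ} (hζ : IsPrimitiveRoot ζ (2 * n)) (hn : n ≠ 0) :
    ζ ^ n = -1 :=
  (by simpa [hn] using hζ.pow_of_dvd hn (dvd_mul_left n 2) : IsPrimitiveRoot (ζ ^ n) 2)
    |>.eq_neg_one_of_two_right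

lemma ncard_odd_lt_two_mul (n : ℕ) : {k | Odd k ∧ k < 2 * n}.ncard = n := by
  have h : {k | Odd k ∧ k < 2 * n} = (fun i => 2 * i + 1) '' Iio n := by
    ext k
    simp only [mem_ofPred_eq, mem_image, mem_Iio, Nat.odd_iff]
    constructor
    · rintro ⟨hk, hkn⟩
      exact ⟨k / 2, by omega, by omega⟩
    · rintro ⟨i, hi, rfl⟩
      omega
  rw [h, ncard_image_of_injective _ (fun i j hij => by omega), ncard_Iio_nat]

section Slopes

variable {K : Type*} [Field K] {u c : K} {n : ℕ}

lemma injOn_inv_pow_mul (hu : IsPrimitiveRoot u (2 * n)) (hc : c ≠ 0) :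
    InjOn (fun k => (u ^ k)⁻¹ * c) (Iio (2 * n)) :=
  fun _ hi _ hj h => hu.pow_inj hi hj (inv_injective (mul_right_cancel₀ hc h))

def slopes (u c : K) (n : ℕ) : Set K :=
  (fun k => (u ^ k)⁻¹ * c) '' {k | Odd k ∧ k < 2 * n}

variable [CharZero K]

lemma ne_zero_of_pow_eq_two {x : K} (hx : x ^ n = 2) : x ≠ 0 := by
  rintro rfl
  cases n <;> norm_num at hx

lemma ne_zero_of_pow_eq_neg_two {x : K} (hx : x ^ n = -2) : x ≠ 0 := by
  rintro rfl
  cases n <;> norm_num at hx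

lemma mul_mul_ne_one_of_pow_eq_neg_two {x y z : K} (hx : x ^ n = -2) (hy : y ^ n = -2)
    (hz : z ^ n = -2) : x * y * z ≠ 1 := by
  intro h
  have h' := congrArg (· ^ n) h
  simp only [mul_pow, hx, hy, hz, one_pow] at h'
  norm_num at h'

lemma inv_pow_mul_pow_eq_neg_two (hu : IsPrimitiveRoot u (2 * n)) (hc : c ^ n = 2) {k : ℕ}
    (hk : Odd k) : ((u ^ k)⁻¹ * c) ^ n = -2 := by
  rw [mul_pow, inv_pow, ← pow_mul, mul_comm k n, pow_mul,
    hu.pow_eq_neg_one_of_two_mul (by rintro rfl; norm_num at hc), hk.neg_one_pow, hc]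
  norm_num

lemma pow_eq_neg_two_of_mem_slopes (hu : IsPrimitiveRoot u (2 * n)) (hc : c ^ n = 2) {a : K}
    (ha : a ∈ slopes u c n) : a ^ n = -2 := by
  obtain ⟨k, ⟨hk, -⟩, rfl⟩ := ha
  exact inv_pow_mul_pow_eq_neg_two hu hc hk

lemma ncard_slopes (hu : IsPrimitiveRoot u (2 * n)) (hc : c ^ n = 2) :
    (slopes u c n).ncard = n := by
  rw [slopes, ((injOn_inv_pow_mul hu (ne_zero_of_pow_eq_two hc)).mono
    fun _ hk => hk.2).ncard_image, ncard_odd_lt_two_mul]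

end Slopes

def line (i : Fin 3) (a : ℂ) : Set (ℙ ℂ (Fin 3 → ℂ)) :=
  {P | P.rep (i + 2) = a * P.rep (i + 1)}

def family (i : Fin 3) (S : Set ℂ) : Set (ℙ ℂ (Fin 3 → ℂ)) :=
  ⋃ a ∈ S, line i a

/-- `(1 : b : ab)` rotated so that the `1` sits in position `i`. -/
def crossVec (i : Fin 3) (a b : ℂ) : Fin 3 → ℂ :=
  fun j => ![1, b, a * b] (j - i)

noncomputable def crossPoint (i : Fin 3) (a b : ℂ) : ℙ ℂ (Fin 3 → ℂ) :=
  P2mk (crossVec i a b)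

variable {P : ℙ ℂ (Fin 3 → ℂ)} {i : Fin 3} {a b : ℂ}

lemma mem_line_add_two : P ∈ line (i + 2) b ↔ P.rep (i + 1) = b * P.rep i := by
  have h₂ : i + 2 + 2 = i + 1 := by revert i; decide
  have h₁ : i + 2 + 1 = i := by revert i; decide
  rw [line, mem_ofPred_eq, h₁, h₂]

lemma rep_ne_zero_of_mem_line_of_mem_line (ha : P ∈ line i a) (hb : P ∈ line (i + 2) b) :
    P.rep i ≠ 0 := by
  intro h₀
  rw [mem_line_add_two, h₀, mul_zero] at hb
  have h₂ : P.rep (i + 2) = 0 := by rw [ha.out, hb, mul_zero]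
  apply P.rep_nonzero
  funext j
  rcases fin3_eq_or_eq_add_one_or_eq_add_two i j with rfl | rfl | rfl <;> assumption

lemma eq_P2mk_iff {v : Fin 3 → ℂ} (hv : v ≠ 0) : P = P2mk v ↔ ∃ t : ℂ, P.rep = t • v := by
  conv_lhs => rw [← P.mk_rep, P2mk, dif_pos hv,
    Projectivization.mk_eq_mk_iff' ℂ _ _ P.rep_nonzero hv]
  exact exists_congr fun t => eq_comm

@[simp] lemma crossVec_apply_self : crossVec i a b i = 1 := by simp [crossVec]
@[simp] lemma crossVec_apply_add_one : crossVec i a b (i + 1) = b := by simp [crossVec]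
@[simp] lemma crossVec_apply_add_two : crossVec i a b (i + 2) = a * b := by simp [crossVec]

lemma crossVec_zero (a b : ℂ) : crossVec 0 a b = ![1, b, a * b] := by
  ext j; simp [crossVec]

lemma crossVec_ne_zero : crossVec i a b ≠ 0 :=
  fun h => one_ne_zero (crossVec_apply_self.symm.trans (congrFun h i))

lemma mem_line_inter_iff : P ∈ line i a ∧ P ∈ line (i + 2) b ↔ P = crossPoint i a b := by
  rw [crossPoint, eq_P2mk_iff crossVec_ne_zero, mem_line_add_two]
  constructor
  · rintro ⟨ha, hb⟩
    refine ⟨P.rep i, funext fun j => ?_⟩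
    rcases fin3_eq_or_eq_add_one_or_eq_add_two i j with rfl | rfl | rfl
    · simp
    · simp [hb, mul_comm]
    · simp only [ha.out, hb, Pi.smul_apply, crossVec_apply_add_two, smul_eq_mul]
      ring
  · rintro ⟨t, ht⟩
    simp only [line, mem_ofPred_eq, ht, Pi.smul_apply, smul_eq_mul, crossVec_apply_self,
      crossVec_apply_add_one, crossVec_apply_add_two]
    constructor <;> ring

lemma eq_P2mk_single_of_mem_line_of_mem_line (hab : a ≠ b) (ha : P ∈ line i a)
    (hb : P ∈ line i b) : P = P2mk (Pi.single i 1) := by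
  have h₁ : P.rep (i + 1) = 0 := by
    by_contra h
    exact hab (mul_right_cancel₀ h (ha.out.symm.trans hb.out))
  have h₂ : P.rep (i + 2) = 0 := by rw [ha.out, h₁, mul_zero]
  rw [eq_P2mk_iff (by simp)]
  refine ⟨P.rep i, funext fun j => ?_⟩
  rcases fin3_eq_or_eq_add_one_or_eq_add_two i j with rfl | rfl | rfl <;> simp [h₁, h₂]

lemma mul_mul_eq_one_of_mem_line {x y z : ℂ} (h₀ : P ∈ line 0 x) (h₁ : P ∈ line 1 y)
    (h₂ : P ∈ line 2 z) : x * y * z = 1 := by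
  have hP : P.rep 0 ≠ 0 := rep_ne_zero_of_mem_line_of_mem_line h₀ h₂
  refine mul_right_cancel₀ hP ?_
  have e₀ : P.rep 2 = x * P.rep 1 := h₀
  have e₁ : P.rep 0 = y * P.rep 2 := h₁
  have e₂ : P.rep 1 = z * P.rep 0 := h₂
  calc x * y * z * P.rep 0 = y * (x * (z * P.rep 0)) := by ring
    _ = 1 * P.rep 0 := by rw [← e₂, ← e₀, ← e₁, one_mul]

variable {S : Set ℂ}

lemma inter_family_add_two_eq_image (i : Fin 3) (S : Set ℂ) :
    family i S ∩ family (i + 2) S = (fun p : ℂ × ℂ => crossPoint i p.1 p.2) '' S ×ˢ S := by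
  ext P
  simp only [family, mem_inter_iff, mem_iUnion₂, mem_image, mem_prod, Prod.exists,
    exists_prop]
  constructor
  · rintro ⟨⟨a, ha, hPa⟩, ⟨b, hb, hPb⟩⟩
    exact ⟨a, b, ⟨ha, hb⟩, (mem_line_inter_iff.1 ⟨hPa, hPb⟩).symm⟩
  · rintro ⟨a, b, ⟨ha, hb⟩, rfl⟩
    obtain ⟨hPa, hPb⟩ := mem_line_inter_iff.2 rfl
    exact ⟨⟨a, ha, hPa⟩, ⟨b, hb, hPb⟩⟩

lemma union_inter_family_eq_image (S : Set ℂ) :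
    family 0 S ∩ family 1 S ∪ (family 0 S ∩ family 2 S ∪ family 1 S ∩ family 2 S) =
      (fun q : Fin 3 × ℂ × ℂ => crossPoint q.1 q.2.1 q.2.2) '' univ ×ˢ S ×ˢ S := by
  have h₀ := inter_family_add_two_eq_image 0 S
  have h₁ := inter_family_add_two_eq_image 1 S
  have h₂ := inter_family_add_two_eq_image 2 S
  simp only [show (0 : Fin 3) + 2 = 2 from rfl, show (1 : Fin 3) + 2 = 0 from rfl,
    show (2 : Fin 3) + 2 = 1 from rfl] at h₀ h₁ h₂
  rw [inter_comm, h₁, h₀, inter_comm, h₂]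
  ext P
  simp only [mem_union, mem_image, mem_prod, mem_univ, true_and, Prod.exists]
  constructor
  · rintro (⟨a, b, hab, rfl⟩ | ⟨a, b, hab, rfl⟩ | ⟨a, b, hab, rfl⟩)
    exacts [⟨1, a, b, hab, rfl⟩, ⟨0, a, b, hab, rfl⟩, ⟨2, a, b, hab, rfl⟩]
  · rintro ⟨i, a, b, hab, rfl⟩
    fin_cases i
    exacts [Or.inr (Or.inl ⟨a, b, hab, rfl⟩), Or.inl ⟨a, b, hab, rfl⟩,
      Or.inr (Or.inr ⟨a, b, hab, rfl⟩)]

lemma exists_mul_mul_eq_one_of_mem_family (h₀ : P ∈ family 0 S) (h₁ : P ∈ family 1 S)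
    (h₂ : P ∈ family 2 S) : ∃ x ∈ S, ∃ y ∈ S, ∃ z ∈ S, x * y * z = 1 := by
  obtain ⟨x, hx, hPx⟩ := mem_iUnion₂.1 h₀
  obtain ⟨y, hy, hPy⟩ := mem_iUnion₂.1 h₁
  obtain ⟨z, hz, hPz⟩ := mem_iUnion₂.1 h₂
  exact ⟨x, hx, y, hy, z, hz, mul_mul_eq_one_of_mem_line hPx hPy hPz⟩

lemma injOn_crossPoint (hS₀ : 0 ∉ S) (hS : ∀ x ∈ S, ∀ y ∈ S, ∀ z ∈ S, x * y * z ≠ 1) :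
    InjOn (fun q : Fin 3 × ℂ × ℂ => crossPoint q.1 q.2.1 q.2.2) (univ ×ˢ S ×ˢ S) := by
  rintro ⟨i, a, b⟩ ⟨-, ha, hb⟩ ⟨j, a', b'⟩ ⟨-, ha', hb'⟩ (h : crossPoint i a b = _)
  set P := crossPoint i a b
  obtain ⟨hPa, hPb⟩ : P ∈ line i a ∧ P ∈ line (i + 2) b := mem_line_inter_iff.2 rfl
  obtain ⟨hPa', hPb'⟩ := mem_line_inter_iff.2 h
  obtain rfl | hij := eq_or_ne i j
  · have hi : P.rep i ≠ 0 := rep_ne_zero_of_mem_line_of_mem_line hPa hPb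
    rw [mem_line_add_two] at hPb hPb'
    have hbb' : b = b' := mul_right_cancel₀ hi (hPb.symm.trans hPb')
    have hi₁ : P.rep (i + 1) ≠ 0 := by
      rw [hPb]; exact mul_ne_zero (ne_of_mem_of_not_mem hb hS₀) hi
    have haa' : a = a' := mul_right_cancel₀ hi₁ (hPa.out.symm.trans hPa'.out)
    rw [haa', hbb']
  · have hP : ∀ k, P ∈ family k S := fun k => by
      rcases fin3_eq_or_eq_add_two_of_ne i j k hij with rfl | rfl | rfl | rfl
      exacts [mem_biUnion ha hPa, mem_biUnion hb hPb, mem_biUnion ha' hPa',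
        mem_biUnion hb' hPb']
    obtain ⟨x, hx, y, hy, z, hz, hxyz⟩ :=
      exists_mul_mul_eq_one_of_mem_family (hP 0) (hP 1) (hP 2)
    exact absurd hxyz (hS x hx y hy z hz)

lemma ncard_union_inter_family (hS₀ : 0 ∉ S)
    (hS : ∀ x ∈ S, ∀ y ∈ S, ∀ z ∈ S, x * y * z ≠ 1) :
    (family 0 S ∩ family 1 S ∪ (family 0 S ∩ family 2 S ∪ family 1 S ∩ family 2 S)).ncard =
      3 * S.ncard ^ 2 := by
  rw [union_inter_family_eq_image, (injOn_crossPoint hS₀ hS).ncard_image,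
    ncard_prod, ncard_prod, ncard_univ, Nat.card_fin, sq]

lemma mem_family_slopes_iff {u c : ℂ} {n : ℕ} :
    P ∈ family i (slopes u c n) ↔
      ∃ k, Odd k ∧ k < 2 * n ∧ P.rep (i + 2) = (u ^ k)⁻¹ * c * P.rep (i + 1) := by
  simp only [family, slopes, mem_iUnion₂, exists_prop, exists_mem_image, mem_ofPred_eq, line,
    and_assoc]

end FermatArrangement

open FermatArrangement

theorem fermat_M_arrangement_general (d : ℕ) (u c : ℂ)
    (hu : IsPrimitiveRoot u (2 * d)) (hc : c ^ d = 2) :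
    -- (i)
    (∀ k₁ k₂ : ℕ, Odd k₁ → k₁ < 2 * d → Odd k₂ → k₂ < 2 * d → k₁ ≠ k₂ →
      ∀ P : ℙ ℂ (Fin 3 → ℂ),
        P.rep 2 = (u ^ k₁)⁻¹ * c * P.rep 1 → P.rep 2 = (u ^ k₂)⁻¹ * c * P.rep 1 →
        P = P2mk ![1, 0, 0]) ∧
    (∀ k₁ k₂ : ℕ, Odd k₁ → k₁ < 2 * d → Odd k₂ → k₂ < 2 * d → k₁ ≠ k₂ →
      ∀ P : ℙ ℂ (Fin 3 → ℂ),
        P.rep 0 = (u ^ k₁)⁻¹ * c * P.rep 2 → P.rep 0 = (u ^ k₂)⁻¹ * c * P.rep 2 →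
        P = P2mk ![0, 1, 0]) ∧
    (∀ k₁ k₂ : ℕ, Odd k₁ → k₁ < 2 * d → Odd k₂ → k₂ < 2 * d → k₁ ≠ k₂ →
      ∀ P : ℙ ℂ (Fin 3 → ℂ),
        P.rep 1 = (u ^ k₁)⁻¹ * c * P.rep 0 → P.rep 1 = (u ^ k₂)⁻¹ * c * P.rep 0 →
        P = P2mk ![0, 0, 1]) ∧
    -- (ii)
    (∀ k₁ k₂ : ℕ, Odd k₁ → k₁ < 2 * d → Odd k₂ → k₂ < 2 * d →
      (∀ P : ℙ ℂ (Fin 3 → ℂ),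
        (P.rep 2 = (u ^ k₁)⁻¹ * c * P.rep 1 ∧ P.rep 1 = (u ^ k₂)⁻¹ * c * P.rep 0) ↔
          P = P2mk ![1, (u ^ k₂)⁻¹ * c, (u ^ (k₁ + k₂))⁻¹ * c ^ 2]) ∧
      (∀ k : ℕ, Odd k → k < 2 * d →
        (1 : ℂ) ≠ (u ^ k)⁻¹ * c * ((u ^ (k₁ + k₂))⁻¹ * c ^ 2)) ∧
      (1 : ℂ) ^ d + ((u ^ k₂)⁻¹ * c) ^ d + ((u ^ (k₁ + k₂))⁻¹ * c ^ 2) ^ d ≠ 0) ∧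
    Set.ncard {P : ℙ ℂ (Fin 3 → ℂ) |
        ((∃ k, Odd k ∧ k < 2 * d ∧ P.rep 2 = (u ^ k)⁻¹ * c * P.rep 1) ∧
          (∃ k, Odd k ∧ k < 2 * d ∧ P.rep 0 = (u ^ k)⁻¹ * c * P.rep 2)) ∨
        ((∃ k, Odd k ∧ k < 2 * d ∧ P.rep 2 = (u ^ k)⁻¹ * c * P.rep 1) ∧
          (∃ k, Odd k ∧ k < 2 * d ∧ P.rep 1 = (u ^ k)⁻¹ * c * P.rep 0)) ∨
        ((∃ k, Odd k ∧ k < 2 * d ∧ P.rep 0 = (u ^ k)⁻¹ * c * P.rep 2) ∧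
          (∃ k, Odd k ∧ k < 2 * d ∧ P.rep 1 = (u ^ k)⁻¹ * c * P.rep 0))} = 3 * d ^ 2 := by
  have hpow : ∀ k, Odd k → ((u ^ k)⁻¹ * c) ^ d = -2 :=
    fun k hk => inv_pow_mul_pow_eq_neg_two hu hc hk
  have hne : ∀ k₁ k₂, k₁ < 2 * d → k₂ < 2 * d → k₁ ≠ k₂ → (u ^ k₁)⁻¹ * c ≠ (u ^ k₂)⁻¹ * c :=
    fun k₁ k₂ h₁ h₂ => (injOn_inv_pow_mul hu (ne_zero_of_pow_eq_two hc)).ne h₁ h₂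
  have hprod : ∀ k₁ k₂ : ℕ, (u ^ k₁)⁻¹ * c * ((u ^ k₂)⁻¹ * c) = (u ^ (k₁ + k₂))⁻¹ * c ^ 2 := by
    intro k₁ k₂; rw [pow_add, mul_inv]; ring
  have hS : ∀ a ∈ slopes u c d, a ^ d = -2 := fun a => pow_eq_neg_two_of_mem_slopes hu hc
  refine ⟨fun k₁ k₂ _ h₁ _ h₂ hk P hP₁ hP₂ => ?_, fun k₁ k₂ _ h₁ _ h₂ hk P hP₁ hP₂ => ?_,
    fun k₁ k₂ _ h₁ _ h₂ hk P hP₁ hP₂ => ?_,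
    fun k₁ k₂ hk₁ _ hk₂ _ => ⟨fun P => ?_, fun k hk _ => ?_, ?_⟩, ?_⟩
  · convert eq_P2mk_single_of_mem_line_of_mem_line (i := 0) (hne _ _ h₁ h₂ hk) hP₁ hP₂ using 2
    ext j; fin_cases j <;> rfl
  · convert eq_P2mk_single_of_mem_line_of_mem_line (i := 1) (hne _ _ h₁ h₂ hk) hP₁ hP₂ using 2
    ext j; fin_cases j <;> rfl
  · convert eq_P2mk_single_of_mem_line_of_mem_line (i := 2) (hne _ _ h₁ h₂ hk) hP₁ hP₂ using 2
    ext j; fin_cases j <;> rfl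
  · rw [← hprod, ← crossVec_zero, ← crossPoint]
    exact mem_line_inter_iff (i := 0)
  · rw [← hprod, ← mul_assoc]
    exact (mul_mul_ne_one_of_pow_eq_neg_two (hpow k hk) (hpow k₁ hk₁) (hpow k₂ hk₂)).symm
  · rw [← hprod, mul_pow ((u ^ k₁)⁻¹ * c), hpow k₁ hk₁, hpow k₂ hk₂]
    norm_num
  · convert ncard_union_inter_family
      (fun h => ne_zero_of_pow_eq_neg_two (hS 0 h) rfl)
      (fun x hx y hy z hz => mul_mul_ne_one_of_pow_eq_neg_two (hS x hx) (hS y hy) (hS z hz))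
      using 2
    · ext P
      simp only [mem_union, mem_inter_iff, mem_family_slopes_iff]
      rfl
    · rw [ncard_slopes hu hc]

/-- Intersection pattern of the `3d` lines of the arrangement
`M : (z^d + 2y^d)(x^d + 2z^d)(y^d + 2x^d) = 0`, whose families are
`M_x : z = u^{-k}c y`, `M_y : x = u^{-k}c z`, `M_z : y = u^{-k}c x` for `k` odd,
`0 < k < 2d`, where `u` is a primitive `2d`-th root of unity and `c^d = 2`:
(i) two distinct lines of one family meet only at the corresponding coordinate point, so
the coordinate points are ordinary `d`-fold points of `M`;
(ii) the lines `z - u^{-k₁}c y = 0` and `y - u^{-k₂}c x = 0` meet exactly at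
`(1 : u^{-k₂}c : u^{-(k₁+k₂)}c²)`, which lies on no line of `M_y` and not on the Fermat
curve `F_d`; all intersection points of lines from different families are ordinary double
points of `M`, and there are `3d²` of them. -/
theorem fermat_M_arrangement (d : ℕ) (hd : 3 ≤ d) (u c : ℂ)
    (hu : IsPrimitiveRoot u (2 * d)) (hc : c ^ d = 2) :
    -- (i)
    (∀ k₁ k₂ : ℕ, Odd k₁ → k₁ < 2 * d → Odd k₂ → k₂ < 2 * d → k₁ ≠ k₂ →
      ∀ P : ℙ ℂ (Fin 3 → ℂ),
        P.rep 2 = (u ^ k₁)⁻¹ * c * P.rep 1 → P.rep 2 = (u ^ k₂)⁻¹ * c * P.rep 1 →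
        P = P2mk ![1, 0, 0]) ∧
    (∀ k₁ k₂ : ℕ, Odd k₁ → k₁ < 2 * d → Odd k₂ → k₂ < 2 * d → k₁ ≠ k₂ →
      ∀ P : ℙ ℂ (Fin 3 → ℂ),
        P.rep 0 = (u ^ k₁)⁻¹ * c * P.rep 2 → P.rep 0 = (u ^ k₂)⁻¹ * c * P.rep 2 →
        P = P2mk ![0, 1, 0]) ∧
    (∀ k₁ k₂ : ℕ, Odd k₁ → k₁ < 2 * d → Odd k₂ → k₂ < 2 * d → k₁ ≠ k₂ →
      ∀ P : ℙ ℂ (Fin 3 → ℂ),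
        P.rep 1 = (u ^ k₁)⁻¹ * c * P.rep 0 → P.rep 1 = (u ^ k₂)⁻¹ * c * P.rep 0 →
        P = P2mk ![0, 0, 1]) ∧
    -- (ii)
    (∀ k₁ k₂ : ℕ, Odd k₁ → k₁ < 2 * d → Odd k₂ → k₂ < 2 * d →
      (∀ P : ℙ ℂ (Fin 3 → ℂ),
        (P.rep 2 = (u ^ k₁)⁻¹ * c * P.rep 1 ∧ P.rep 1 = (u ^ k₂)⁻¹ * c * P.rep 0) ↔
          P = P2mk ![1, (u ^ k₂)⁻¹ * c, (u ^ (k₁ + k₂))⁻¹ * c ^ 2]) ∧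
      (∀ k : ℕ, Odd k → k < 2 * d →
        (1 : ℂ) ≠ (u ^ k)⁻¹ * c * ((u ^ (k₁ + k₂))⁻¹ * c ^ 2)) ∧
      (1 : ℂ) ^ d + ((u ^ k₂)⁻¹ * c) ^ d + ((u ^ (k₁ + k₂))⁻¹ * c ^ 2) ^ d ≠ 0) ∧
    Set.ncard {P : ℙ ℂ (Fin 3 → ℂ) |
        ((∃ k, Odd k ∧ k < 2 * d ∧ P.rep 2 = (u ^ k)⁻¹ * c * P.rep 1) ∧
          (∃ k, Odd k ∧ k < 2 * d ∧ P.rep 0 = (u ^ k)⁻¹ * c * P.rep 2)) ∨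
        ((∃ k, Odd k ∧ k < 2 * d ∧ P.rep 2 = (u ^ k)⁻¹ * c * P.rep 1) ∧
          (∃ k, Odd k ∧ k < 2 * d ∧ P.rep 1 = (u ^ k)⁻¹ * c * P.rep 0)) ∨
        ((∃ k, Odd k ∧ k < 2 * d ∧ P.rep 0 = (u ^ k)⁻¹ * c * P.rep 2) ∧
          (∃ k, Odd k ∧ k < 2 * d ∧ P.rep 1 = (u ^ k)⁻¹ * c * P.rep 0))} = 3 * d ^ 2 :=
  fermat_M_arrangement_general d u c hu hc
end

section
/- Fix a ∈ ℂ with a^d = 1. For each b ∈ ℂ with b^d = −2, let T_b be the line a^{d−1}x + y + b^{d−1}z = 0 (the tangent line to the Fermat curve F_d at the sextactic point (a : 1 : b)). Then the point (a : −1 : 0) lies on T_b for every b with b^d = −2, and it is the unique point of ℙ²(ℂ) lying on all d of these tangent lines; thus the d tangent lines at the d co-linear sextactic points on the line x = ay meet in exactly one point, which lies on the line z = 0. -/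
open scoped LinearAlgebra.Projectivization

/-- Fix `a` with `a^d = 1`.  The point `(a : -1 : 0)` lies on the tangent line
`T_b : a^{d-1}x + y + b^{d-1}z = 0` to the Fermat curve `F_d` at the sextactic point
`(a : 1 : b)` for every `b` with `b^d = -2`, and it is the unique point of `ℙ²(ℂ)` lying
on all `d` of these tangent lines; it lies on the line `z = 0`. -/
theorem fermat_tangents_at_colinear_sextactic_B (d : ℕ) (hd : 3 ≤ d)
    (a : ℂ) (ha : a ^ d = 1) :
    (∀ b : ℂ, b ^ d = -2 →
      a ^ (d - 1) * (P2mk ![a, -1, 0]).rep 0 + (P2mk ![a, -1, 0]).rep 1 +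
        b ^ (d - 1) * (P2mk ![a, -1, 0]).rep 2 = 0) ∧
    (P2mk ![a, -1, 0]).rep 2 = 0 ∧
    (∀ P : ℙ ℂ (Fin 3 → ℂ),
      (∀ b : ℂ, b ^ d = -2 →
        a ^ (d - 1) * P.rep 0 + P.rep 1 + b ^ (d - 1) * P.rep 2 = 0) →
      P = P2mk ![a, -1, 0]) := by
  have ha0 : a ≠ 0 := by
    intro h
    rw [h, zero_pow (by omega)] at ha
    exact zero_ne_one ha
  set A : ℂ := a ^ (d - 1) with hA
  have hpow : A * a = 1 := by
    rw [hA, ← pow_succ, Nat.sub_add_cancel (by omega), ha]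
  have hvne : (![a, -1, 0] : Fin 3 → ℂ) ≠ 0 := fun h => by simpa using congrFun h 1
  have hP2 : P2mk ![a, -1, 0] = Projectivization.mk ℂ ![a, -1, 0] hvne := by
    simp [P2mk, hvne]
  obtain ⟨c, hc⟩ :=
    (Projectivization.mk_eq_mk_iff ℂ _ _ (P2mk ![a, -1, 0]).rep_nonzero hvne).mp
      (by rw [Projectivization.mk_rep, hP2])
  have h0 : (P2mk ![a, -1, 0]).rep 0 = (c : ℂ) * a := by
    rw [← hc]; simp [Units.smul_def]
  have h1 : (P2mk ![a, -1, 0]).rep 1 = -(c : ℂ) := by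
    rw [← hc]; simp [Units.smul_def]
  have h2 : (P2mk ![a, -1, 0]).rep 2 = 0 := by
    rw [← hc]; simp [Units.smul_def]
  refine ⟨fun b hb => ?_, h2, fun P hP => ?_⟩
  · rw [h0, h1, h2]
    linear_combination (c : ℂ) * hpow
  · -- uniqueness
    obtain ⟨b₀, hb₀⟩ := IsAlgClosed.exists_pow_nat_eq (-2 : ℂ) (n := d) (by omega)
    have hb₀0 : b₀ ≠ 0 := by
      intro h
      rw [h, zero_pow (by omega)] at hb₀
      norm_num at hb₀
    set ζ : ℂ := Complex.exp (2 * Real.pi * Complex.I / d) with hζdef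
    have hζ : IsPrimitiveRoot ζ d := Complex.isPrimitiveRoot_exp d (by omega)
    have hb₁ : (ζ * b₀) ^ d = -2 := by
      rw [mul_pow, hζ.pow_eq_one, one_mul, hb₀]
    have e0 := hP b₀ hb₀
    have e1 := hP (ζ * b₀) hb₁
    have hdiff : (b₀ ^ (d - 1) - (ζ * b₀) ^ (d - 1)) * P.rep 2 = 0 := by
      linear_combination e0 - e1
    have hne : b₀ ^ (d - 1) - (ζ * b₀) ^ (d - 1) ≠ 0 := by
      rw [mul_pow, sub_ne_zero]
      intro h
      have hb : b₀ ^ (d - 1) ≠ 0 := pow_ne_zero _ hb₀0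
      have hz1 : ζ ^ (d - 1) = 1 := by
        have h' : ζ ^ (d - 1) * b₀ ^ (d - 1) = 1 * b₀ ^ (d - 1) := by
          rw [one_mul, ← h]
        exact mul_right_cancel₀ hb h'
      exact hζ.pow_ne_one_of_pos_of_lt (by omega) (by omega) hz1
    have hr2 : P.rep 2 = 0 := by
      rcases mul_eq_zero.mp hdiff with h | h
      · exact absurd h hne
      · exact h
    have hr1 : P.rep 1 = -A * P.rep 0 := by
      rw [hr2, mul_zero, add_zero] at e0
      linear_combination e0
    have hr0 : P.rep 0 ≠ 0 := by
      intro h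
      apply P.rep_nonzero
      funext i
      fin_cases i <;> simp [h, hr1, hr2]
    rw [hP2, ← Projectivization.mk_rep P]
    rw [Projectivization.mk_eq_mk_iff ℂ _ _ P.rep_nonzero hvne]
    refine ⟨Units.mk0 (P.rep 0 / a) (div_ne_zero hr0 ha0), ?_⟩
    funext i
    fin_cases i
    · show P.rep 0 / a * a = P.rep 0
      field_simp
    · show P.rep 0 / a * (-1) = P.rep 1
      rw [hr1, div_mul_eq_mul_div, div_eq_iff ha0]
      linear_combination P.rep 0 * hpow
    · show P.rep 0 / a * 0 = P.rep 2
      rw [mul_zero, hr2]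
end

section
/- Fix b ∈ ℂ with b^d = −2. For each a ∈ ℂ with a^d = 1, let T_a be the line a^{d−1}x + y + b^{d−1}z = 0 (the tangent line to the Fermat curve F_d at the sextactic point (a : 1 : b)). Then the point (0 : 2 : b) lies on T_a for every a with a^d = 1, and it is the unique point of ℙ²(ℂ) lying on all d of these tangent lines; thus the d tangent lines at the d sextactic points co-linear on the line z = (b/1)·y of the arrangement M meet in exactly one point, which lies on the line x = 0 and not on F_d. -/
/-!
Since `b^{d-1} · b = b^d = -2`, the vector `(0, 2, b)` satisfies `a^{d-1}x + y + b^{d-1}z = 0`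
for every `a`. Conversely, comparing the equations for `a = 1` and for a primitive `d`-th root
of unity `ζ` (for which `ζ^{d-1} ≠ 1`) forces `x = 0`, and then `y = -b^{d-1}z`, so the
solutions form the single line spanned by `(0, 2, b)`. On this line the Fermat form equals
`c^d (2^d + b^d) = c^d (2^d - 2)`, which vanishes only for `c = 0` because `d ≥ 2`.
-/

open scoped LinearAlgebra.Projectivization

section P2mk

variable {v : Fin 3 → ℂ}

lemma P2mk_of_ne_zero (hv : v ≠ 0) : P2mk v = Projectivization.mk ℂ v hv :=
  dif_pos hv

lemma exists_rep_P2mk_eq_smul (hv : v ≠ 0) : ∃ c : ℂ, c ≠ 0 ∧ (P2mk v).rep = c • v := by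
  obtain ⟨c, hc⟩ := Projectivization.exists_smul_eq_mk_rep ℂ v hv
  exact ⟨c, c.ne_zero, by rw [P2mk_of_ne_zero hv, ← hc]; rfl⟩

lemma eq_P2mk_of_rep_eq_smul (hv : v ≠ 0) {P : ℙ ℂ (Fin 3 → ℂ)} {c : ℂ}
    (h : P.rep = c • v) : P = P2mk v := by
  rw [P2mk_of_ne_zero hv, ← P.mk_rep, Projectivization.mk_eq_mk_iff']
  exact ⟨c, h.symm⟩

end P2mk

lemma eq_zero_of_forall_pow_eq_one {d : ℕ} {x y : ℂ} (hd : 2 ≤ d)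
    (h : ∀ a : ℂ, a ^ d = 1 → a ^ (d - 1) * x + y = 0) : x = 0 ∧ y = 0 := by
  obtain ⟨ζ, hζ⟩ : ∃ ζ : ℂ, IsPrimitiveRoot ζ d := ⟨_, Complex.isPrimitiveRoot_exp d (by omega)⟩
  have hζ_pred : ζ ^ (d - 1) ≠ 1 :=
    hζ.pow_ne_one_of_pos_of_lt (by omega) (by omega)
  have h_one := h 1 (one_pow d)
  have h_ζ := h _ hζ.pow_eq_one
  rw [one_pow] at h_one
  have hx : x = 0 := by
    have : (1 - ζ ^ (d - 1)) * x = 0 := by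
      linear_combination h_one - h_ζ
    exact (mul_eq_zero.1 this).resolve_left (sub_ne_zero.2 hζ_pred.symm)
  exact ⟨hx, by simpa [hx] using h_one⟩

section Tangents

variable {d : ℕ} {b : ℂ}

lemma two_pow_ne_two (hd : 2 ≤ d) : (2 : ℂ) ^ d ≠ 2 := by
  have h4 : (4 : ℕ) ≤ 2 ^ d := by
    simpa using Nat.pow_le_pow_right (show 0 < 2 by norm_num) hd
  exact_mod_cast (by omega : (2 : ℕ) ^ d ≠ 2)

lemma ne_zero_of_pow_eq_neg_two (hd : d ≠ 0) (hb : b ^ d = -2) : b ≠ 0 := by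
  rintro rfl
  norm_num [zero_pow hd] at hb

lemma eq_smul_of_forall_tangent (hd : 2 ≤ d) (hb : b ^ d = -2) {v : Fin 3 → ℂ}
    (h : ∀ a : ℂ, a ^ d = 1 → a ^ (d - 1) * v 0 + v 1 + b ^ (d - 1) * v 2 = 0) :
    v = (v 2 / b) • ![0, 2, b] := by
  obtain ⟨hx, hyz⟩ := eq_zero_of_forall_pow_eq_one (y := v 1 + b ^ (d - 1) * v 2) hd
    fun a ha => by rw [← add_assoc]; exact h a ha
  have hb0 := ne_zero_of_pow_eq_neg_two (by omega) hb
  have hbb : b ^ (d - 1) * b = -2 := by rw [pow_sub_one_mul (by omega), hb]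
  funext i
  fin_cases i
  · simpa using hx
  · show v 1 = v 2 / b * 2
    field_simp
    linear_combination b * hyz - v 2 * hbb
  · show v 2 = v 2 / b * b
    field_simp

end Tangents

/-- Fix `b` with `b^d = -2`.  The point `(0 : 2 : b)` lies on the tangent line
`T_a : a^{d-1}x + y + b^{d-1}z = 0` to the Fermat curve `F_d` at the sextactic point
`(a : 1 : b)` for every `a` with `a^d = 1`, and it is the unique point of `ℙ²(ℂ)` lying
on all `d` of these tangent lines; it lies on the line `x = 0` and not on `F_d`. -/
theorem fermat_tangents_at_colinear_sextactic_M (d : ℕ) (hd : 3 ≤ d)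
    (b : ℂ) (hb : b ^ d = -2) :
    (∀ a : ℂ, a ^ d = 1 →
      a ^ (d - 1) * (P2mk ![0, 2, b]).rep 0 + (P2mk ![0, 2, b]).rep 1 +
        b ^ (d - 1) * (P2mk ![0, 2, b]).rep 2 = 0) ∧
    (P2mk ![0, 2, b]).rep 0 = 0 ∧
    (P2mk ![0, 2, b]).rep 0 ^ d + (P2mk ![0, 2, b]).rep 1 ^ d +
      (P2mk ![0, 2, b]).rep 2 ^ d ≠ 0 ∧
    (∀ P : ℙ ℂ (Fin 3 → ℂ),
      (∀ a : ℂ, a ^ d = 1 →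
        a ^ (d - 1) * P.rep 0 + P.rep 1 + b ^ (d - 1) * P.rep 2 = 0) →
      P = P2mk ![0, 2, b]) := by
  have hv : (![0, 2, b] : Fin 3 → ℂ) ≠ 0 := fun h => by simpa using congrFun h 1
  obtain ⟨c, hc, hrep⟩ := exists_rep_P2mk_eq_smul hv
  have hbb : b ^ (d - 1) * b = -2 := by rw [pow_sub_one_mul (by omega), hb]
  simp only [hrep, Pi.smul_apply, smul_eq_mul, Matrix.cons_val_zero, Matrix.cons_val_one,
    Matrix.cons_val_two, Matrix.head_cons, Matrix.tail_cons, mul_zero]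
  refine ⟨fun a _ => by linear_combination c * hbb, trivial, ?_,
    fun P hP => eq_P2mk_of_rep_eq_smul hv (eq_smul_of_forall_tangent (by omega) hb hP)⟩
  rw [zero_pow (by omega), zero_add, mul_pow, mul_pow, ← mul_add, hb]
  exact mul_ne_zero (pow_ne_zero d hc) (sub_ne_zero.2 (two_pow_ne_two (by omega)))
end

section
/- Fix an odd integer k and let w ∈ ℂ satisfy w² = 3d(2d−1). For every integer j, the set of points (x : y : z) ∈ ℙ²(ℂ) with x = 0 lying on the hyperosculating conic O_{j,k} = 0 equals the set of the two distinct points (0 : −4d(d−2) + 2(d−1)w : d(d+1)u^{−k}c) and (0 : −4d(d−2) − 2(d−1)w : d(d+1)u^{−k}c); in particular this set is independent of j. Thus for every d ≥ 3 the d hyperosculating conics at the d sextactic points s_{j,k} (j = 0,…,d−1) co-linear on a line of the arrangement M have exactly two common points on the line x = 0. -/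
open scoped LinearAlgebra.Projectivization

namespace Projectivization

variable {F : Type*} [Field F]

lemma rep_mk_apply_eq_zero {ι : Type*} {v : ι → F} (hv : v ≠ 0) {i : ι} (hi : v i = 0) :
    (mk F v hv).rep i = 0 := by
  obtain ⟨a, ha⟩ := exists_smul_eq_mk_rep F v hv
  rw [← ha, Pi.smul_apply, hi, smul_zero]

lemma mk_eq_mk_iff_of_apply_zero_eq_zero {v w : Fin 3 → F} (hv : v ≠ 0) (hw : w ≠ 0)
    (hv0 : v 0 = 0) (hw0 : w 0 = 0) : mk F v hv = mk F w hw ↔ v 1 * w 2 = v 2 * w 1 := by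
  rw [mk_eq_mk_iff_crossProduct_eq_zero]
  simp [crossProduct, funext_iff, Fin.forall_fin_succ, hv0, hw0, sub_eq_zero]

end Projectivization

lemma hyperosculating_trace_factor {R : Type*} [CommRing R] (D l w y z : R)
    (hw : w ^ 2 = 3 * D * (2 * D - 1)) :
    D * (D + 1) * (D * (D + 1) * y ^ 2 - 4 * (D + 1) * (2 * D - 3) * l ^ 2 * z ^ 2
        + 8 * D * (D - 2) * l * y * z)
      = (D * (D + 1) * y - (-4 * D * (D - 2) + 2 * (D - 1) * w) * l * z)
        * (D * (D + 1) * y - (-4 * D * (D - 2) - 2 * (D - 1) * w) * l * z) := by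
  linear_combination (4 * (D - 1) ^ 2 * l ^ 2 * z ^ 2) * hw

lemma P2mk_eq {v : Fin 3 → ℂ} (hv : v ≠ 0) : P2mk v = Projectivization.mk ℂ v hv :=
  dif_pos hv

lemma vecCons_zero_ne_zero {r s : ℂ} (hs : s ≠ 0) : (![0, r, s] : Fin 3 → ℂ) ≠ 0 :=
  fun h ↦ hs (by simpa using congrFun h 2)

lemma rep_P2mk_zero (r s : ℂ) (hs : s ≠ 0) : (P2mk ![0, r, s]).rep 0 = 0 := by
  rw [P2mk_eq (vecCons_zero_ne_zero hs)]
  exact Projectivization.rep_mk_apply_eq_zero _ rfl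

lemma eq_P2mk_iff_of_rep_zero {P : ℙ ℂ (Fin 3 → ℂ)} (hP : P.rep 0 = 0) {r s : ℂ} (hs : s ≠ 0) :
    P = P2mk ![0, r, s] ↔ P.rep 1 * s = P.rep 2 * r := by
  conv_lhs => rw [← P.mk_rep, P2mk_eq (vecCons_zero_ne_zero hs)]
  rw [Projectivization.mk_eq_mk_iff_of_apply_zero_eq_zero _ _ hP rfl]
  rfl

lemma P2mk_ne_P2mk {r r' s : ℂ} (hr : r ≠ r') (hs : s ≠ 0) :
    P2mk ![0, r, s] ≠ P2mk ![0, r', s] := by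
  rw [P2mk_eq (vecCons_zero_ne_zero hs), P2mk_eq (vecCons_zero_ne_zero hs), ne_eq,
    Projectivization.mk_eq_mk_iff_of_apply_zero_eq_zero _ _ rfl rfl]
  simpa [mul_comm r s, hs] using hr

section HyperosculatingTrace

variable {D l s w : ℂ}

lemma linear_factor_eq_zero_iff {P : ℙ ℂ (Fin 3 → ℂ)} (hP : P.rep 0 = 0) (hD : D * (D + 1) ≠ 0)
    (hls : l * s = D * (D + 1)) (r : ℂ) :
    D * (D + 1) * P.rep 1 - r * l * P.rep 2 = 0 ↔ P = P2mk ![0, r, s] := by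
  rw [eq_P2mk_iff_of_rep_zero hP (right_ne_zero_of_mul (hls ▸ hD))]
  constructor <;> intro h
  · refine mul_left_cancel₀ (left_ne_zero_of_mul (hls ▸ hD)) ?_
    linear_combination h + P.rep 1 * hls
  · linear_combination l * h - P.rep 1 * hls

lemma hyperosculating_trace_eq_zero_iff_of_rep_zero {P : ℙ ℂ (Fin 3 → ℂ)} (hP : P.rep 0 = 0)
    (hD : D * (D + 1) ≠ 0) (hls : l * s = D * (D + 1)) (hw : w ^ 2 = 3 * D * (2 * D - 1)) :
    D * (D + 1) * P.rep 1 ^ 2 - 4 * (D + 1) * (2 * D - 3) * l ^ 2 * P.rep 2 ^ 2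
        + 8 * D * (D - 2) * l * P.rep 1 * P.rep 2 = 0 ↔
      P = P2mk ![0, -4 * D * (D - 2) + 2 * (D - 1) * w, s] ∨
      P = P2mk ![0, -4 * D * (D - 2) - 2 * (D - 1) * w, s] := by
  rw [← mul_right_inj' hD, mul_zero, hyperosculating_trace_factor D l w _ _ hw, mul_eq_zero,
    linear_factor_eq_zero_iff hP hD hls, linear_factor_eq_zero_iff hP hD hls]

lemma hyperosculating_trace_eq_zero_iff (P : ℙ ℂ (Fin 3 → ℂ)) (hD : D * (D + 1) ≠ 0)
    (hls : l * s = D * (D + 1)) (hw : w ^ 2 = 3 * D * (2 * D - 1)) :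
    (P.rep 0 = 0 ∧ D * (D + 1) * P.rep 1 ^ 2 - 4 * (D + 1) * (2 * D - 3) * l ^ 2 * P.rep 2 ^ 2
        + 8 * D * (D - 2) * l * P.rep 1 * P.rep 2 = 0) ↔
      P = P2mk ![0, -4 * D * (D - 2) + 2 * (D - 1) * w, s] ∨
      P = P2mk ![0, -4 * D * (D - 2) - 2 * (D - 1) * w, s] := by
  refine ⟨fun ⟨hP, hQ⟩ ↦ (hyperosculating_trace_eq_zero_iff_of_rep_zero hP hD hls hw).1 hQ,
    fun h ↦ ?_⟩
  have hP : P.rep 0 = 0 := by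
    rcases h with rfl | rfl <;> exact rep_P2mk_zero _ _ (right_ne_zero_of_mul (hls ▸ hD))
  exact ⟨hP, (hyperosculating_trace_eq_zero_iff_of_rep_zero hP hD hls hw).2 h⟩

end HyperosculatingTrace

lemma hyperosculating_roots_ne {d : ℕ} (hd : 2 ≤ d) {w : ℂ}
    (hw : w ^ 2 = 3 * (d : ℂ) * (2 * (d : ℂ) - 1)) :
    -4 * (d : ℂ) * ((d : ℂ) - 2) + 2 * ((d : ℂ) - 1) * w
      ≠ -4 * (d : ℂ) * ((d : ℂ) - 2) - 2 * ((d : ℂ) - 1) * w := by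
  intro h
  obtain hd1 | rfl := mul_eq_zero.1 (by linear_combination h / 4 : ((d : ℂ) - 1) * w = 0)
  · have : ((1 : ℕ) : ℂ) = d := by linear_combination -hd1
    exact absurd (Nat.cast_injective this) (by omega)
  · have : ((3 * d : ℕ) : ℂ) = (6 * d * d : ℕ) := by push_cast; linear_combination hw
    have : 3 * d = 6 * d * d := Nat.cast_injective this
    nlinarith

theorem fermat_hyperosculating_conics_M_general (d : ℕ) (hd : 3 ≤ d) (ζ u c : ℂ)
    (hu : IsPrimitiveRoot u (2 * d)) (hc : c ^ d = 2)
    (k : ℤ) (w : ℂ) (hw : w ^ 2 = 3 * (d : ℂ) * (2 * (d : ℂ) - 1)) :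
    (∀ j : ℤ,
      {P : ℙ ℂ (Fin 3 → ℂ) | P.rep 0 = 0 ∧
          (d : ℂ) * ((d : ℂ) + 1) * ζ ^ (-2 * j) * P.rep 0 ^ 2
            + (d : ℂ) * ((d : ℂ) + 1) * P.rep 1 ^ 2
            - 4 * ((d : ℂ) + 1) * (2 * (d : ℂ) - 3) * u ^ (2 * k) * (c⁻¹) ^ 2 * P.rep 2 ^ 2
            - 2 * ((d : ℂ) - 2) * (5 * (d : ℂ) - 3) * ζ ^ (-j) * P.rep 0 * P.rep 1
            + 8 * (d : ℂ) * ((d : ℂ) - 2) * ζ ^ (-j) * u ^ k * c⁻¹ * P.rep 0 * P.rep 2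
            + 8 * (d : ℂ) * ((d : ℂ) - 2) * u ^ k * c⁻¹ * P.rep 1 * P.rep 2 = 0}
        = {P2mk ![0, -4 * (d : ℂ) * ((d : ℂ) - 2) + 2 * ((d : ℂ) - 1) * w,
                  (d : ℂ) * ((d : ℂ) + 1) * u ^ (-k) * c],
           P2mk ![0, -4 * (d : ℂ) * ((d : ℂ) - 2) - 2 * ((d : ℂ) - 1) * w,
                  (d : ℂ) * ((d : ℂ) + 1) * u ^ (-k) * c]}) ∧
    P2mk ![0, -4 * (d : ℂ) * ((d : ℂ) - 2) + 2 * ((d : ℂ) - 1) * w,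
           (d : ℂ) * ((d : ℂ) + 1) * u ^ (-k) * c] ≠
      P2mk ![0, -4 * (d : ℂ) * ((d : ℂ) - 2) - 2 * ((d : ℂ) - 1) * w,
             (d : ℂ) * ((d : ℂ) + 1) * u ^ (-k) * c] := by
  have hu0 : u ≠ 0 := hu.ne_zero (by omega)
  have hc0 : c ≠ 0 := by
    rintro rfl
    norm_num [zero_pow (by omega : d ≠ 0)] at hc
  have hD : (d : ℂ) * ((d : ℂ) + 1) ≠ 0 :=
    mul_ne_zero (Nat.cast_ne_zero.2 (by omega)) (Nat.cast_add_one_ne_zero d)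
  have hls : u ^ k * c⁻¹ * ((d : ℂ) * ((d : ℂ) + 1) * u ^ (-k) * c) = (d : ℂ) * ((d : ℂ) + 1) := by
    rw [zpow_neg]
    field_simp
  have hsq : u ^ (2 * k) * (c⁻¹) ^ 2 = (u ^ k * c⁻¹) ^ 2 := by
    rw [mul_pow, mul_comm 2 k, zpow_mul, zpow_ofNat]
  refine ⟨fun j ↦ Set.ext fun P ↦ ?_, P2mk_ne_P2mk (hyperosculating_roots_ne (by omega) hw) (right_ne_zero_of_mul (hls ▸ hD))⟩
  rw [Set.mem_ofPred_eq, Set.mem_insert_iff, Set.mem_singleton_iff,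
    ← hyperosculating_trace_eq_zero_iff P hD hls hw]
  refine and_congr_right fun hP ↦ ?_
  rw [hP, mul_assoc _ (u ^ (2 * k)), hsq]
  constructor <;> intro h <;> linear_combination h

/-- Fix an odd `k` and `w` with `w² = 3d(2d-1)`.  For every `j`, the intersection of the
hyperosculating conic `O_{j,k}` of the Fermat curve `F_d` (at the sextactic point
`s_{j,k} = (ζ^j : 1 : u^{-k}c)`) with the line `x = 0` is the pair of distinct points
`(0 : -4d(d-2) ± 2(d-1)w : d(d+1)u^{-k}c)`; in particular it is independent of `j`.
Thus for every `d ≥ 3` the `d` hyperosculating conics at the `d` sextactic points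
`s_{j,k}` (`j = 0,…,d-1`), co-linear on a line of the arrangement `M`, have exactly two
common points on the line `x = 0`. -/
theorem fermat_hyperosculating_conics_M (d : ℕ) (hd : 3 ≤ d) (ζ u c : ℂ)
    (hζ : IsPrimitiveRoot ζ d) (hu : IsPrimitiveRoot u (2 * d)) (hc : c ^ d = 2)
    (k : ℤ) (hk : Odd k) (w : ℂ) (hw : w ^ 2 = 3 * (d : ℂ) * (2 * (d : ℂ) - 1)) :
    (∀ j : ℤ,
      {P : ℙ ℂ (Fin 3 → ℂ) | P.rep 0 = 0 ∧
          (d : ℂ) * ((d : ℂ) + 1) * ζ ^ (-2 * j) * P.rep 0 ^ 2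
            + (d : ℂ) * ((d : ℂ) + 1) * P.rep 1 ^ 2
            - 4 * ((d : ℂ) + 1) * (2 * (d : ℂ) - 3) * u ^ (2 * k) * (c⁻¹) ^ 2 * P.rep 2 ^ 2
            - 2 * ((d : ℂ) - 2) * (5 * (d : ℂ) - 3) * ζ ^ (-j) * P.rep 0 * P.rep 1
            + 8 * (d : ℂ) * ((d : ℂ) - 2) * ζ ^ (-j) * u ^ k * c⁻¹ * P.rep 0 * P.rep 2
            + 8 * (d : ℂ) * ((d : ℂ) - 2) * u ^ k * c⁻¹ * P.rep 1 * P.rep 2 = 0}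
        = {P2mk ![0, -4 * (d : ℂ) * ((d : ℂ) - 2) + 2 * ((d : ℂ) - 1) * w,
                  (d : ℂ) * ((d : ℂ) + 1) * u ^ (-k) * c],
           P2mk ![0, -4 * (d : ℂ) * ((d : ℂ) - 2) - 2 * ((d : ℂ) - 1) * w,
                  (d : ℂ) * ((d : ℂ) + 1) * u ^ (-k) * c]}) ∧
    P2mk ![0, -4 * (d : ℂ) * ((d : ℂ) - 2) + 2 * ((d : ℂ) - 1) * w,
           (d : ℂ) * ((d : ℂ) + 1) * u ^ (-k) * c] ≠
      P2mk ![0, -4 * (d : ℂ) * ((d : ℂ) - 2) - 2 * ((d : ℂ) - 1) * w,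
             (d : ℂ) * ((d : ℂ) + 1) * u ^ (-k) * c] :=
  fermat_hyperosculating_conics_M_general d hd ζ u c hu hc k w hw
end
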